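/- arXiv:1607.01004 — 5 statements merged into one kernel-verified Lean document; each statement's English description precedes it below -/
import Mathlib

section
/- Let f be a valuation of a generalized 2d-gon S with point set P, and let H_f be the set of points with f-value strictly less than the maximum value M_f of f. Then for every point x of S, f(x) = M_f − d(x, P \ H_f), where the distance is from x to the complement of H_f in the point graph. -/
/-- A point-line incidence geometry. -/
structure Geometry where
  P : Type
  L : Type
  I : P → L → Prop

namespace Geometry

variable (G : Geometry)

/-- The incidence graph: bipartite graph on points and lines. -/
def incGraph : SimpleGraph (G.P ⊕ G.L) where
  Adj a b :=
    match a, b with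
    | Sum.inl p, Sum.inr l => G.I p l
    | Sum.inr l, Sum.inl p => G.I p l
    | _, _ => False
  symm := ⟨by rintro (p | l) (p' | l') h <;> simp_all⟩
  loopless := ⟨by rintro (p | l) h <;> simp_all⟩

/-- The point graph (collinearity graph). -/
def pointGraph : SimpleGraph G.P where
  Adj x y := x ≠ y ∧ ∃ l, G.I x l ∧ G.I y l
  symm := ⟨by rintro x y ⟨h, l, h1, h2⟩; exact ⟨h.symm, l, h2, h1⟩⟩
  loopless := ⟨by rintro x ⟨h, _⟩; exact h rfl⟩

/-- Distance between two points, in the point graph. -/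
noncomputable def dist (x y : G.P) : ℕ := G.pointGraph.dist x y

/-- A generalized 2d-gon: the incidence graph has diameter 2d and girth 4d. -/
def IsGenPolygon (d : ℕ) : Prop :=
  G.incGraph.ediam = (2 * d : ℕ) ∧ G.incGraph.girth = (4 * d : ℕ)

/-- The geometry has order (s, t): `s + 1` points on each line and `t + 1` lines
through each point. -/
def HasOrder (s t : ℕ) : Prop :=
  (∀ l : G.L, Nat.card {p : G.P // G.I p l} = s + 1) ∧
  (∀ p : G.P, Nat.card {l : G.L // G.I p l} = t + 1)

/-- Distance (in the point graph) from a point to a set of points. -/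
noncomputable def distSet (x : G.P) (A : Set G.P) : ℕ := sInf (G.dist x '' A)

/-- Distance from a point to a line: the minimal point-graph distance to a point
of the line. -/
noncomputable def ptLineDist (x : G.P) (l : G.L) : ℕ :=
  sInf {n : ℕ | ∃ q, G.I q l ∧ G.dist x q = n}

/-- Distance between two lines: the minimal point-graph distance between a point of
one and a point of the other. -/
noncomputable def lineDist (l m : G.L) : ℕ :=
  sInf {n : ℕ | ∃ p q, G.I p l ∧ G.I q m ∧ G.dist p q = n}

/-- The maximal value of a function on the points. -/
noncomputable def Mf (f : G.P → ℕ) : ℕ := ⨆ p, f p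

/-- A (polygonal) valuation of a generalized 2d-gon. -/
structure IsValuation (f : G.P → ℕ) : Prop where
  exists_zero : ∃ p, f p = 0
  line_prop : ∀ l : G.L, ∃! x, G.I x l ∧ ∀ y, G.I y l → y ≠ x → f y = f x + 1
  pv3 : ∀ x, f x < G.Mf f →
    ∀ l₁ l₂ : G.L, G.I x l₁ → G.I x l₂ →
      (∃ y, G.I y l₁ ∧ f y + 1 = f x) → (∃ y, G.I y l₂ ∧ f y + 1 = f x) → l₁ = l₂

/-- The subgeometry induced on a set of points and a set of lines. -/
def sub (PS : Set G.P) (LS : Set G.L) : Geometry :=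
  ⟨PS, LS, fun p l => G.I p.1 l.1⟩

/-- The subgeometry determined by `PS` and `LS` is full: every point of the ambient
geometry incident with a line of the subgeometry belongs to the subgeometry. -/
def IsFullSub (PS : Set G.P) (LS : Set G.L) : Prop :=
  ∀ l ∈ LS, ∀ p, G.I p l → p ∈ PS

/-- A hyperplane: a proper subset of the point set such that every line has exactly
one or all of its points in it. -/
def IsHyperplane (H : Set G.P) : Prop :=
  H ≠ Set.univ ∧ ∀ l : G.L, (∃! p, G.I p l ∧ p ∈ H) ∨ (∀ p, G.I p l → p ∈ H)

/-- A 1-ovoid: a set of points meeting every line in exactly one point. -/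
def IsOvoid1 (O : Set G.P) : Prop := ∀ l : G.L, ∃! p, G.I p l ∧ p ∈ O

/-- A semi-singular hyperplane of a generalized hexagon with center `p`:
`{p} ∪ Γ₁(p) ∪ O'`, where `O'` is a 1-ovoid of the geometry induced on `Γ₃(p)` by
the lines at distance 2 from `p`. -/
def IsSemiSingular (H : Set G.P) (p : G.P) : Prop :=
  ∃ O' : Set G.P,
    (∀ y ∈ O', G.dist p y = 3) ∧
    (∀ l : G.L, G.ptLineDist p l = 2 → ∃! y, G.I y l ∧ y ∈ O') ∧
    H = {p} ∪ {y | G.pointGraph.Adj p y} ∪ O'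

/-- A partial linear space: two distinct points are on at most one common line. -/
def IsPartialLinear : Prop :=
  ∀ (p q : G.P) (l m : G.L), p ≠ q → G.I p l → G.I q l → G.I p m → G.I q m → l = m

/-- A near 2d-gon: a partial linear space with connected point graph of diameter `d`,
in which every line has a unique point nearest to any given point. -/
def IsNearPolygon (d : ℕ) : Prop :=
  G.IsPartialLinear ∧ G.pointGraph.Connected ∧ G.pointGraph.ediam = (d : ℕ) ∧
  ∀ (x : G.P) (l : G.L), ∃! p, G.I p l ∧ ∀ q, G.I q l → G.dist x p ≤ G.dist x q

end Geometry

open SimpleGraph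



private lemma aux_find {V : Type} {Γ : SimpleGraph V} (S : V → Prop) [DecidablePred S] :
    ∀ {a v : V} (w : Γ.Walk a v), S v →
      ∃ (z : V) (w₁ : Γ.Walk a z) (w₂ : Γ.Walk z v),
        w = w₁.append w₂ ∧ S z ∧ ∀ y ∈ w₁.support, y ≠ z → ¬ S y := by
  intro a v w hv
  induction w with
  | @nil u =>
    refine ⟨u, .nil, .nil, rfl, hv, ?_⟩
    intro y hy hne
    simp only [Walk.support_nil, List.mem_singleton] at hy
    exact absurd hy hne
  | @cons u b v h w ih =>
    by_cases ha : S u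
    · refine ⟨u, .nil, .cons h w, rfl, ha, ?_⟩
      intro y hy hne
      simp only [Walk.support_nil, List.mem_singleton] at hy
      exact absurd hy hne
    · obtain ⟨z, w₁, w₂, hw, hz, hmin⟩ := ih hv
      refine ⟨z, .cons h w₁, w₂, by rw [hw, Walk.cons_append], hz, ?_⟩
      intro y hy hne
      rw [Walk.support_cons, List.mem_cons] at hy
      rcases hy with rfl | hy'
      · exact ha
      · exact hmin y hy' hne

private lemma aux_theta {V : Type} {Γ : SimpleGraph V} {u x y c : V}
    (p : Γ.Walk u x) (q : Γ.Walk u y) (hp : p.IsPath) (hq : q.IsPath)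
    (hxy : x ≠ y) (hxc : Γ.Adj x c) (hyc : Γ.Adj y c)
    (hcp : c ∉ p.support) (hcq : c ∉ q.support) :
    ∃ (a : V) (w : Γ.Walk a a), w.IsCycle ∧ w.length ≤ p.length + q.length + 2 := by
  classical
  obtain ⟨z, r₁, r₂, hr, hz, hmin⟩ :=
    aux_find (· ∈ q.support) p.reverse q.start_mem_support
  have hr₁path : r₁.IsPath := by
    have hrev : p.reverse.IsPath := hp.reverse
    rw [hr] at hrev
    exact hrev.of_append_left
  have hr₁sub : ∀ w ∈ r₁.support, w ∈ p.support := by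
    intro w hw
    have : w ∈ p.reverse.support := by
      rw [hr, Walk.mem_support_append_iff]; exact Or.inl hw
    rwa [Walk.support_reverse, List.mem_reverse] at this
  set A := q.dropUntil z hz with hA
  have hApath : A.IsPath := hq.dropUntil hz
  have hAsub : ∀ w ∈ A.support, w ∈ q.support := fun w hw => q.support_dropUntil_subset hz hw
  have hcC : c ∉ r₁.support := fun hc => hcp (hr₁sub c hc)
  have hcA : c ∉ A.support := fun hc => hcq (hAsub c hc)
  have hAcons : A.support = z :: A.support.tail := A.support_eq_cons
  have hzAt : z ∉ A.support.tail := by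
    intro hzt
    have := hApath.support_nodup
    rw [hAcons] at this
    exact (List.nodup_cons.mp this).1 hzt
  -- the path part of the cycle
  set P₁ : Γ.Walk x c := r₁.append (A.concat hyc) with hP₁
  have hsuppConcat : (A.concat hyc).support = A.support ++ [c] := by
    rw [Walk.support_concat]
  have hP₁supp : P₁.support = r₁.support ++ (A.support.tail ++ [c]) := by
    rw [hP₁, Walk.support_append, hsuppConcat, hAcons]
    rfl
  have hP₁path : P₁.IsPath := by
    rw [Walk.isPath_def, hP₁supp, List.nodup_append]
    refine ⟨hr₁path.support_nodup, ?_, ?_⟩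
    · rw [List.nodup_append]
      refine ⟨?_, List.nodup_singleton c, ?_⟩
      · have := hApath.support_nodup
        rw [hAcons] at this
        exact (List.nodup_cons.mp this).2
      · rintro w hw _ hwc rfl
        rw [List.mem_singleton] at hwc
        subst hwc
        exact hcA (by rw [hAcons]; exact List.mem_cons_of_mem _ hw)
    · rintro w hw _ hw' rfl
      rw [List.mem_append] at hw'
      rcases hw' with hw' | hw'
      · by_cases hwz : w = z
        · subst hwz; exact hzAt hw'
        · exact hmin w hw hwz (hAsub w (by rw [hAcons]; exact List.mem_cons_of_mem _ hw'))
      · rw [List.mem_singleton] at hw'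
        subst hw'
        exact hcC hw
  have hedge : s(c, x) ∉ P₁.edges := by
    intro hmem
    rw [hP₁, Walk.edges_append, List.mem_append] at hmem
    rcases hmem with hmem | hmem
    · exact hcC (r₁.fst_mem_support_of_mem_edges hmem)
    · rw [Walk.edges_concat, List.concat_eq_append, List.mem_append] at hmem
      rcases hmem with hmem | hmem
      · exact hcA (A.fst_mem_support_of_mem_edges hmem)
      · rw [List.mem_singleton, Sym2.eq_iff] at hmem
        rcases hmem with ⟨hcy, -⟩ | ⟨-, hxy'⟩
        · exact hcq (hcy ▸ q.end_mem_support)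
        · exact hxy hxy'
  refine ⟨c, Walk.cons hxc.symm P₁, ?_, ?_⟩
  · rw [Walk.cons_isCycle_iff]
    exact ⟨hP₁path, hedge⟩
  · have h1 : r₁.length ≤ p.length := by
      have := congrArg Walk.length hr
      rw [Walk.length_reverse, Walk.length_append] at this
      omega
    have h2 : A.length ≤ q.length := q.length_dropUntil_le hz
    rw [Walk.length_cons, hP₁, Walk.length_append, Walk.length_concat]
    omega


private lemma aux_parity {V : Type} {Γ : SimpleGraph V} (col : V → Bool)
    (hcol : ∀ {a b : V}, Γ.Adj a b → col a ≠ col b) :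
    ∀ {a b : V} (w : Γ.Walk a b), (col a = col b) ↔ Even w.length := by
  intro a b w
  induction w with
  | nil => simp
  | @cons u v b h w ih =>
    have h1 := hcol h
    rw [Walk.length_cons, Nat.even_add_one, ← ih]
    cases hu : col u <;> cases hv : col v <;> cases hb : col b <;> simp_all

private lemma aux_dist_parity {V : Type} {Γ : SimpleGraph V} (col : V → Bool)
    (hcol : ∀ {a b : V}, Γ.Adj a b → col a ≠ col b) (hconn : Γ.Connected)
    {u x y : V} (hadj : Γ.Adj x y) : Γ.dist u x ≠ Γ.dist u y := by
  intro he
  obtain ⟨p, hp⟩ := (hconn.preconnected u x).exists_walk_length_eq_dist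
  obtain ⟨q, hq⟩ := (hconn.preconnected u y).exists_walk_length_eq_dist
  have h1 := aux_parity col hcol p
  have h2 := aux_parity col hcol q
  rw [hp, he] at h1
  rw [hq] at h2
  have h3 := hcol hadj
  have : col x = col y := by
    cases hcx : col x <;> cases hcy : col y <;> cases hcu : col u <;> simp_all <;>
      · simp [Nat.odd_iff] at h1
        simp [Nat.even_iff] at h2
        omega
  exact h3 this

private lemma aux_getVert_getElem {V : Type} {Γ : SimpleGraph V} :
    ∀ {a b : V} (w : Γ.Walk a b) (i : ℕ), i ≤ w.length →
      w.support[i]? = some (w.getVert i) := by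
  intro a b w
  induction w with
  | @nil u => intro i hi; simp at hi; subst hi; simp [Walk.getVert_zero]
  | @cons u v b h w ih =>
    intro i hi
    cases i with
    | zero => simp [Walk.support_cons, Walk.getVert_zero]
    | succ n =>
      rw [Walk.support_cons, List.getElem?_cons_succ, Walk.getVert_cons_succ]
      exact ih n (by rw [Walk.length_cons] at hi; omega)

private lemma aux_cycle_getVert_ne {V : Type} {Γ : SimpleGraph V} {a : V} {w : Γ.Walk a a}
    (hw : w.IsCycle) {i j : ℕ} (hi : 1 ≤ i) (hj : 1 ≤ j) (hi' : i ≤ w.length)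
    (hj' : j ≤ w.length) (hij : i ≠ j) : w.getVert i ≠ w.getVert j := by
  intro he
  have hnd := hw.support_nodup
  have hcons : w.support = a :: w.support.tail := w.support_eq_cons
  have hlen : w.support.tail.length = w.length := by
    have h := w.length_support
    rw [hcons] at h
    simp only [List.length_cons] at h
    omega
  have h1 : w.support.tail[i-1]? = some (w.getVert i) := by
    have h := aux_getVert_getElem w i hi'
    rw [hcons, show i = (i-1)+1 from by omega, List.getElem?_cons_succ] at h
    rwa [show (i-1)+1 = i from by omega] at h
  have h2 : w.support.tail[j-1]? = some (w.getVert j) := by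
    have h := aux_getVert_getElem w j hj'
    rw [hcons, show j = (j-1)+1 from by omega, List.getElem?_cons_succ] at h
    rwa [show (j-1)+1 = j from by omega] at h
  rw [he, ← h2] at h1
  have := (List.getElem?_inj (by omega : i - 1 < w.support.tail.length) hnd).mp h1
  omega

private lemma aux_girth_le {V : Type} {Γ : SimpleGraph V} {a : V} {w : Γ.Walk a a}
    (hw : w.IsCycle) : Γ.girth ≤ w.length := by
  have h1 : Γ.egirth ≤ (w.length : ℕ∞) := by
    refine le_trans (le_trans (iInf_le _ a) (iInf_le _ w)) (iInf_le _ hw)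
  have := ENat.toNat_le_toNat h1 (by simp)
  simpa [SimpleGraph.girth] using this


private lemma aux_ecc {V : Type} {Γ : SimpleGraph V} {d : ℕ} (hd : 2 ≤ d)
    (hconn : Γ.Connected) (hdiam : ∀ u v, Γ.dist u v ≤ 2*d) (hg : Γ.girth = 4*d)
    (col : V → Bool) (hcol : ∀ {a b : V}, Γ.Adj a b → col a ≠ col b)
    (u : V) : ∃ w, 2*d ≤ Γ.dist u w := by
  classical
  by_contra hno
  push_neg at hno
  have hac : ¬ Γ.IsAcyclic := by
    intro h
    have := SimpleGraph.girth_eq_zero.mpr h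
    omega
  obtain ⟨a, cw, hcyc, hlen⟩ := SimpleGraph.exists_girth_eq_length.mpr hac
  rw [hg] at hlen
  have hN : 8 ≤ cw.length := by omega
  obtain ⟨i₀, hi₀mem, hmax⟩ := Finset.exists_max_image (Finset.range cw.length)
    (fun i => Γ.dist u (cw.getVert i)) ⟨0, by simp; omega⟩
  rw [Finset.mem_range] at hi₀mem
  set N := cw.length with hNdef
  set t := Γ.dist u (cw.getVert i₀) with ht
  have hmax' : ∀ i, i < N → Γ.dist u (cw.getVert i) ≤ t := by
    intro i hi
    exact hmax i (Finset.mem_range.mpr hi)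
  set j := if i₀ + 1 < N then i₀ + 1 else 0 with hj
  set k := if i₀ = 0 then N - 1 else i₀ - 1 with hk
  have hjN : j < N := by rw [hj]; split <;> omega
  have hkN : k < N := by rw [hk]; split <;> omega
  have hgj : cw.getVert j = cw.getVert (i₀+1) := by
    rw [hj]; split
    · rfl
    · have h1 : i₀ + 1 = N := by omega
      rw [Walk.getVert_zero, h1, hNdef, Walk.getVert_length]
  have hgk : cw.getVert (k+1) = cw.getVert i₀ := by
    rw [hk]; split
    · rename_i h0
      have h1 : N - 1 + 1 = N := by omega
      rw [h1, h0, hNdef, Walk.getVert_length, Walk.getVert_zero]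
    · congr 1; omega
  have hadjj : Γ.Adj (cw.getVert i₀) (cw.getVert j) := by
    rw [hgj]; exact cw.adj_getVert_succ hi₀mem
  have hadjk : Γ.Adj (cw.getVert k) (cw.getVert i₀) := by
    rw [← hgk]; exact cw.adj_getVert_succ (by omega)
  -- t ≥ 1
  have ht1 : 1 ≤ t := by
    by_contra h
    have h0 : t = 0 := by omega
    have : cw.getVert i₀ = u := by
      have := (hconn.dist_eq_zero_iff (u := u) (v := cw.getVert i₀)).mp (by omega)
      exact this.symm
    have h2 : Γ.dist u (cw.getVert j) = 1 := by
      rw [SimpleGraph.dist_eq_one_iff_adj]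
      rw [← this]
      exact hadjj
    have := hmax' j hjN
    omega
  have hdj : Γ.dist u (cw.getVert j) = t - 1 := by
    have h1 := hmax' j hjN
    have h2 : Γ.dist u (cw.getVert j) ≠ t := (aux_dist_parity col hcol hconn hadjj).symm
    have h3 : t ≤ Γ.dist u (cw.getVert j) + 1 := by
      have htri := hconn.dist_triangle (u := u) (v := cw.getVert j) (w := cw.getVert i₀)
      have : Γ.dist (cw.getVert j) (cw.getVert i₀) = 1 := by
        rw [SimpleGraph.dist_eq_one_iff_adj]; exact hadjj.symm
      omega
    omega
  have hdk : Γ.dist u (cw.getVert k) = t - 1 := by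
    have h1 := hmax' k hkN
    have h2 : Γ.dist u (cw.getVert k) ≠ t := aux_dist_parity col hcol hconn hadjk
    have h3 : t ≤ Γ.dist u (cw.getVert k) + 1 := by
      have htri := hconn.dist_triangle (u := u) (v := cw.getVert k) (w := cw.getVert i₀)
      have : Γ.dist (cw.getVert k) (cw.getVert i₀) = 1 := by
        rw [SimpleGraph.dist_eq_one_iff_adj]; exact hadjk
      omega
    omega
  -- the two penultimate vertices are distinct
  have hkj : k ≠ j := by
    rw [hk, hj]; split <;> split <;> omega
  have hbne : cw.getVert k ≠ cw.getVert j := by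
    set k' := if k = 0 then N else k with hk'
    set j' := if j = 0 then N else j with hj'
    have e1 : cw.getVert k' = cw.getVert k := by
      rw [hk']; split
      · rename_i h0
        rw [h0, Walk.getVert_zero, hNdef, Walk.getVert_length]
      · rfl
    have e2 : cw.getVert j' = cw.getVert j := by
      rw [hj']; split
      · rename_i h0
        rw [h0, Walk.getVert_zero, hNdef, Walk.getVert_length]
      · rfl
    rw [← e1, ← e2]
    refine aux_cycle_getVert_ne hcyc ?_ ?_ ?_ ?_ ?_ <;>
      · simp only [hk', hj']
        split_ifs <;> omega
  -- geodesics
  obtain ⟨p₀, hp₀⟩ := (hconn.preconnected u (cw.getVert k)).exists_walk_length_eq_dist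
  obtain ⟨q₀, hq₀⟩ := (hconn.preconnected u (cw.getVert j)).exists_walk_length_eq_dist
  have hp₀path : p₀.IsPath := p₀.isPath_of_length_eq_dist hp₀
  have hq₀path : q₀.IsPath := q₀.isPath_of_length_eq_dist hq₀
  have hcp : cw.getVert i₀ ∉ p₀.support := by
    intro hmem
    have h1 : Γ.dist u (cw.getVert i₀) ≤ (p₀.takeUntil _ hmem).length :=
      SimpleGraph.dist_le _
    have h2 := p₀.length_takeUntil_le hmem
    rw [hp₀, hdk] at h2
    omega
  have hcq : cw.getVert i₀ ∉ q₀.support := by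
    intro hmem
    have h1 : Γ.dist u (cw.getVert i₀) ≤ (q₀.takeUntil _ hmem).length :=
      SimpleGraph.dist_le _
    have h2 := q₀.length_takeUntil_le hmem
    rw [hq₀, hdj] at h2
    omega
  obtain ⟨b, w', hw'cyc, hw'len⟩ :=
    aux_theta p₀ q₀ hp₀path hq₀path hbne hadjk hadjj.symm hcp hcq
  have hgl := aux_girth_le hw'cyc
  rw [hg] at hgl
  have hub : t ≤ 2*d - 1 := by
    have := hno (cw.getVert i₀)
    omega
  rw [hp₀, hq₀, hdk, hdj] at hw'len
  omega

private lemma aux_two {V : Type} {Γ : SimpleGraph V} {d : ℕ} (hd : 2 ≤ d)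
    (hconn : Γ.Connected) (hdiam : ∀ u v, Γ.dist u v ≤ 2*d) (hg : Γ.girth = 4*d)
    (col : V → Bool) (hcol : ∀ {a b : V}, Γ.Adj a b → col a ≠ col b)
    (v : V) : ∃ w₁ w₂, Γ.Adj v w₁ ∧ Γ.Adj v w₂ ∧ w₁ ≠ w₂ := by
  obtain ⟨w, hw⟩ := aux_ecc hd hconn hdiam hg col hcol v
  obtain ⟨pw, hpw⟩ := (hconn.preconnected v w).exists_walk_length_eq_dist
  cases pw with
  | nil =>
    rw [SimpleGraph.dist_self] at hw
    omega
  | @cons _ b _ h p' =>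
    by_cases hall : ∃ w₂, Γ.Adj v w₂ ∧ w₂ ≠ b
    · obtain ⟨w₂, hw₂, hne⟩ := hall
      exact ⟨b, w₂, h, hw₂, fun he => hne he.symm⟩
    · exfalso
      push_neg at hall
      obtain ⟨w', hw'⟩ := aux_ecc hd hconn hdiam hg col hcol b
      have hne : w' ≠ v := by
        intro he
        subst he
        have h1 : Γ.dist b w' ≤ 1 := by
          have := SimpleGraph.dist_le (Walk.cons h.symm Walk.nil)
          simpa using this
        omega
      obtain ⟨pv, hpv⟩ := (hconn.preconnected v w').exists_walk_length_eq_dist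
      cases pv with
      | nil => exact hne rfl
      | @cons _ b2 _ h2 p2 =>
        have hb2 : b2 = b := hall b2 h2
        have h3 : Γ.dist b w' ≤ p2.length := by
          subst hb2; exact SimpleGraph.dist_le p2
        rw [Walk.length_cons] at hpv
        have h4 : Γ.dist v w' ≤ 2*d := hdiam v w'
        omega

open SimpleGraph in
private lemma aux_conv (G : Geometry) :
    ∀ (n : ℕ) {a b : G.P} (W : G.incGraph.Walk (Sum.inl a) (Sum.inl b)), W.length ≤ n →
      ∃ w : G.pointGraph.Walk a b, 2 * w.length ≤ W.length := by
  intro n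
  induction n with
  | zero =>
    intro a b W hW
    cases W with
    | nil => exact ⟨.nil, by simp⟩
    | cons h W' => rw [Walk.length_cons] at hW; omega
  | succ n ih =>
    intro a b W hW
    cases W with
    | nil => exact ⟨.nil, by simp⟩
    | @cons _ m _ h W' =>
      cases m with
      | inl p => exact False.elim h
      | inr l =>
        cases W' with
        | @cons _ m2 _ h2 W'' =>
          cases m2 with
          | inr l2 => exact False.elim h2
          | inl a2 =>
            obtain ⟨w, hwlen⟩ := ih W'' (by
              rw [Walk.length_cons, Walk.length_cons] at hW; omega)
            by_cases haa : a = a2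
            · subst haa
              exact ⟨w, by rw [Walk.length_cons, Walk.length_cons]; omega⟩
            · refine ⟨.cons ⟨haa, l, h, h2⟩ w, ?_⟩
              show 2 * (w.length + 1) ≤ W''.length + 1 + 1
              omega

open SimpleGraph in
private lemma aux_step (G : Geometry) {f : G.P → ℕ} (hf : G.IsValuation f) {a b : G.P}
    (hab : G.pointGraph.Adj a b) : f a ≤ f b + 1 := by
  obtain ⟨hne, l, hal, hbl⟩ := hab
  obtain ⟨m, ⟨hml, hm⟩, -⟩ := hf.line_prop l
  by_cases ham : a = m
  · subst ham
    by_cases hbm : b = a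
    · subst hbm; omega
    · have := hm b hbl hbm; omega
  · have hfa : f a = f m + 1 := hm a hal ham
    by_cases hbm : b = m
    · subst hbm; omega
    · have := hm b hbl hbm; omega

open SimpleGraph in
private lemma aux_lipw (G : Geometry) {f : G.P → ℕ} (hf : G.IsValuation f) :
    ∀ {a b : G.P} (w : G.pointGraph.Walk a b), f a ≤ f b + w.length := by
  intro a b w
  induction w with
  | nil => simp
  | @cons u v b h w ih =>
    have := aux_step G hf h
    rw [Walk.length_cons]
    omega

/-- If f is a valuation of a generalized 2d-gon with point set P and
H_f = {x | f x < M_f}, then f(x) = M_f − d(x, P \ H_f) for every point x. -/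
theorem valuation_eq_max_sub_dist (G : Geometry) (d : ℕ) (hd : 2 ≤ d)
    (hG : G.IsGenPolygon d) (f : G.P → ℕ) (hf : G.IsValuation f) (x : G.P) :
    f x = G.Mf f - G.distSet x ({y | f y < G.Mf f}ᶜ) := by
  classical
  obtain ⟨hdiam, hgirth⟩ := hG
  set Γ := G.incGraph with hΓ
  -- bipartite coloring
  set col : G.P ⊕ G.L → Bool := fun v => match v with | Sum.inl _ => false | Sum.inr _ => true
    with hcoldef
  have hcol : ∀ {a b : G.P ⊕ G.L}, Γ.Adj a b → col a ≠ col b := by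
    rintro (p | l) (p' | l') h <;> first | exact False.elim h | simp [hcoldef]
  -- connectivity of the incidence graph
  have hconn : Γ.Connected := by
    rw [SimpleGraph.connected_iff]
    refine ⟨fun u v => ?_, ⟨Sum.inl x⟩⟩
    refine SimpleGraph.reachable_of_edist_ne_top ?_
    have h1 : Γ.edist u v ≤ ((2*d : ℕ) : ℕ∞) := hdiam ▸ SimpleGraph.edist_le_ediam
    intro h
    rw [h] at h1
    exact absurd (top_le_iff.mp h1) (ENat.coe_ne_top _)
  have hdist2d : ∀ u v, Γ.dist u v ≤ 2*d := by
    intro u v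
    have h1 : Γ.edist u v ≤ ((2*d : ℕ) : ℕ∞) := hdiam ▸ SimpleGraph.edist_le_ediam
    have h2 : Γ.dist u v = (Γ.edist u v).toNat := rfl
    rw [h2]
    have := ENat.toNat_le_toNat h1 (ENat.coe_ne_top _)
    simpa using this
  -- two lines through every point, two points on every line
  have htwo := fun v => aux_two hd hconn hdist2d hgirth col hcol v
  have TWOP : ∀ p : G.P, ∃ l₁ l₂ : G.L, G.I p l₁ ∧ G.I p l₂ ∧ l₁ ≠ l₂ := by
    intro p
    obtain ⟨w₁, w₂, h1, h2, hne⟩ := htwo (Sum.inl p)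
    cases w₁ with
    | inl q => exact False.elim h1
    | inr l₁ =>
      cases w₂ with
      | inl q => exact False.elim h2
      | inr l₂ => exact ⟨l₁, l₂, h1, h2, fun he => hne (by rw [he])⟩
  have TWOL : ∀ l : G.L, ∃ p₁ p₂ : G.P, G.I p₁ l ∧ G.I p₂ l ∧ p₁ ≠ p₂ := by
    intro l
    obtain ⟨w₁, w₂, h1, h2, hne⟩ := htwo (Sum.inr l)
    cases w₁ with
    | inr l' => exact False.elim h1
    | inl p₁ =>
      cases w₂ with
      | inr l' => exact False.elim h2
      | inl p₂ => exact ⟨p₁, p₂, h1, h2, fun he => hne (by rw [he])⟩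
  -- point graph facts
  have PREACH : ∀ a b : G.P, G.pointGraph.Reachable a b := by
    intro a b
    obtain ⟨W⟩ := hconn.preconnected (Sum.inl a) (Sum.inl b)
    obtain ⟨w, -⟩ := aux_conv G W.length W le_rfl
    exact ⟨w⟩
  have PCONN : G.pointGraph.Connected := by
    rw [SimpleGraph.connected_iff]
    exact ⟨fun a b => PREACH a b, ⟨x⟩⟩
  have PDIST : ∀ a b : G.P, G.pointGraph.dist a b ≤ d := by
    intro a b
    obtain ⟨W, hW⟩ := (hconn.preconnected (Sum.inl a) (Sum.inl b)).exists_walk_length_eq_dist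
    obtain ⟨w, hw⟩ := aux_conv G W.length W le_rfl
    have h1 := hdist2d (Sum.inl a) (Sum.inl b)
    have h2 := SimpleGraph.dist_le w
    omega
  have LIP : ∀ a b : G.P, f a ≤ f b + G.pointGraph.dist a b := by
    intro a b
    obtain ⟨w, hw⟩ := (PREACH a b).exists_walk_length_eq_dist
    have := aux_lipw G hf w
    omega
  -- the maximum
  set M := G.Mf f with hM
  have hbdd : BddAbove (Set.range f) := by
    refine ⟨f x + d, ?_⟩
    rintro _ ⟨p, rfl⟩
    have h1 := LIP p x
    have h2 := PDIST p x
    omega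
  have hle : ∀ p, f p ≤ M := by
    intro p
    exact le_ciSup hbdd p
  have hMmem : ∃ p, f p = M := by
    have : M ∈ Set.range f := by
      rw [hM]
      exact Nat.sSup_mem ⟨f x, ⟨x, rfl⟩⟩ hbdd
    obtain ⟨p, hp⟩ := this
    exact ⟨p, hp⟩
  -- the set F of maximal points
  set F : Set G.P := {y | f y < M}ᶜ with hF
  have hFiff : ∀ y, y ∈ F ↔ f y = M := by
    intro y
    constructor
    · intro hy
      have : ¬ f y < M := hy
      have := hle y
      omega
    · intro hy
      intro hy'
      rw [Set.mem_setOf_eq] at hy'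
      omega
  obtain ⟨z₀, hz₀⟩ := hMmem
  have hFne : ∀ y : G.P, (G.dist y '' F).Nonempty :=
    fun y => ⟨G.dist y z₀, ⟨z₀, (hFiff z₀).mpr hz₀, rfl⟩⟩
  -- ascent
  have ASC : ∀ y, f y < M → ∃ y', G.pointGraph.Adj y y' ∧ f y' = f y + 1 := by
    intro y hy
    obtain ⟨l₁, l₂, h1, h2, hll⟩ := TWOP y
    obtain ⟨m₁, ⟨hm₁l, hm₁⟩, -⟩ := hf.line_prop l₁
    obtain ⟨m₂, ⟨hm₂l, hm₂⟩, -⟩ := hf.line_prop l₂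
    have key : ∃ l, G.I y l ∧ ∀ z, G.I z l → z ≠ y → f z = f y + 1 := by
      by_cases e1 : y = m₁
      · subst e1; exact ⟨l₁, h1, fun z hz hzy => hm₁ z hz hzy⟩
      · by_cases e2 : y = m₂
        · subst e2; exact ⟨l₂, h2, fun z hz hzy => hm₂ z hz hzy⟩
        · exact absurd (hf.pv3 y hy l₁ l₂ h1 h2 ⟨m₁, hm₁l, (hm₁ y h1 e1).symm⟩
            ⟨m₂, hm₂l, (hm₂ y h2 e2).symm⟩) hll
    obtain ⟨l, hyl, hmin⟩ := key
    obtain ⟨p₁, p₂, hp₁, hp₂, hpp⟩ := TWOL l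
    by_cases hp : p₁ = y
    · refine ⟨p₂, ⟨fun he => hpp (hp.trans he), l, hyl, hp₂⟩,
        hmin p₂ hp₂ (fun he => hpp (hp.trans he.symm))⟩
    · exact ⟨p₁, ⟨fun he => hp he.symm, l, hyl, hp₁⟩, hmin p₁ hp₁ hp⟩
  -- upper bound by induction
  have UB : ∀ k, ∀ y : G.P, M - f y = k → G.distSet y F ≤ k := by
    intro k
    induction k with
    | zero =>
      intro y hy
      have h1 := hle y
      have hyF : y ∈ F := (hFiff y).mpr (by omega)
      have h2 : G.distSet y F ≤ G.dist y y :=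
        Nat.sInf_le ⟨y, hyF, rfl⟩
      have h3 : G.dist y y = 0 := SimpleGraph.dist_self
      omega
    | succ k ih =>
      intro y hy
      have hyM : f y < M := by
        have := hle y; omega
      obtain ⟨y', hadj, hfy'⟩ := ASC y hyM
      have h1 : M - f y' = k := by
        have := hle y'; omega
      have h2 := ih y' h1
      obtain ⟨z, hzF, hzd⟩ := Nat.sInf_mem (hFne y')
      have h3 : G.distSet y F ≤ G.dist y z := Nat.sInf_le ⟨z, hzF, rfl⟩
      have h4 : G.pointGraph.dist y z ≤ G.pointGraph.dist y y' + G.pointGraph.dist y' z :=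
        PCONN.dist_triangle
      have h5 : G.pointGraph.dist y y' ≤ 1 := by
        have := SimpleGraph.dist_le (SimpleGraph.Walk.cons hadj SimpleGraph.Walk.nil)
        simpa using this
      have h6 : G.dist y' z = G.distSet y' F := hzd
      have h7 : G.dist y z = G.pointGraph.dist y z := rfl
      have h8 : G.dist y' z = G.pointGraph.dist y' z := rfl
      omega
  -- lower bound
  have LB : M - f x ≤ G.distSet x F := by
    obtain ⟨z, hzF, hzd⟩ := Nat.sInf_mem (hFne x)
    have h1 : f z = M := (hFiff z).mp hzF
    have h2 := LIP z x
    have h3 : G.pointGraph.dist z x = G.pointGraph.dist x z := SimpleGraph.dist_comm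
    have h4 : G.distSet x F = G.dist x z := hzd.symm
    have h5 : G.dist x z = G.pointGraph.dist x z := rfl
    omega
  have h2 := UB (M - f x) x rfl
  have h3 := hle x
  omega
end

section
/- Every function f on the points of a generalized 2d-gon satisfying: (i) some point has f-value 0, and (ii) every line L contains a unique point x_L with f(x) = f(x_L)+1 for all other points x on L, takes values only in {0, 1, ..., d}. -/
/-- Every function on the points of a generalized 2d-gon satisfying (PV1) and (PV2)
takes values only in {0, 1, …, d}. -/
theorem pv1_pv2_values_le (G : Geometry) (d : ℕ) (hd : 2 ≤ d)
    (hG : G.IsGenPolygon d) (f : G.P → ℕ)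
    (pv1 : ∃ p, f p = 0)
    (pv2 : ∀ l : G.L, ∃! x, G.I x l ∧ ∀ y, G.I y l → y ≠ x → f y = f x + 1) :
    ∀ p : G.P, f p ≤ d := by
  obtain ⟨hdiam, -⟩ := hG
  obtain ⟨p, hp⟩ := pv1
  have step : ∀ x y, G.pointGraph.Adj x y → f y ≤ f x + 1 := by
    rintro x y ⟨hne, l, hx, hy⟩
    obtain ⟨z, ⟨hzl, hzp⟩, -⟩ := pv2 l
    by_cases hyz : y = z
    · have hx' : f x = f z + 1 := hzp x hx (by rintro rfl; exact hne hyz.symm)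
      subst hyz; omega
    · have hy' : f y = f z + 1 := hzp y hy hyz
      by_cases hxz : x = z
      · subst hxz; omega
      · have hx' : f x = f z + 1 := hzp x hx hxz; omega
  have walkBound : ∀ {a b : G.P} (w : G.pointGraph.Walk a b), f b ≤ f a + w.length := by
    intro a b w
    induction w with
    | nil => simp
    | @cons a c b h w ih =>
      have := step a c h
      simp only [SimpleGraph.Walk.length_cons]
      omega
  have conv : ∀ n (a b : G.P) (w : G.incGraph.Walk (Sum.inl a) (Sum.inl b)),
      w.length ≤ n → ∃ w' : G.pointGraph.Walk a b, 2 * w'.length ≤ n := by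
    intro n
    induction n using Nat.strong_induction_on with
    | _ n ih =>
      intro a b w hw
      cases w with
      | nil => exact ⟨SimpleGraph.Walk.nil, by simp⟩
      | @cons _ v _ h w1 =>
        cases v with
        | inl c => exact absurd h (by simp [Geometry.incGraph])
        | inr l =>
          cases w1 with
          | @cons _ u _ h2 w2 =>
            cases u with
            | inr l' => exact absurd h2 (by simp [Geometry.incGraph])
            | inl c =>
              simp only [SimpleGraph.Walk.length_cons] at hw
              by_cases hac : a = c
              · subst hac
                obtain ⟨w', hle⟩ := ih (n - 2) (by omega) a b w2 (by omega)
                exact ⟨w', by omega⟩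
              · obtain ⟨w', hle⟩ := ih (n - 2) (by omega) c b w2 (by omega)
                exact ⟨SimpleGraph.Walk.cons ⟨hac, l, h, h2⟩ w',
                  by show 2 * (w'.length + 1) ≤ n; omega⟩
  intro x
  have hed : G.incGraph.edist (Sum.inl p) (Sum.inl x) ≤ ((2 * d : ℕ) : ℕ∞) :=
    hdiam ▸ SimpleGraph.edist_le_ediam
  have hne : G.incGraph.edist (Sum.inl p) (Sum.inl x) ≠ ⊤ := by
    intro h; rw [h, top_le_iff] at hed
    exact (ENat.coe_ne_top _) hed
  obtain ⟨w, hw⟩ := G.incGraph.exists_walk_of_edist_ne_top hne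
  have hwlen : w.length ≤ 2 * d := by
    have : (w.length : ℕ∞) ≤ ((2 * d : ℕ) : ℕ∞) := hw ▸ hed
    exact_mod_cast this
  obtain ⟨w', hw'⟩ := conv (2 * d) p x w hwlen
  have := walkBound w'
  omega
end

section
/- Let O be a 1-ovoid of a generalized 2d-gon S (d ≥ 2). Then the map f defined by f(x) = 0 for x in O and f(x) = 1 for x not in O is a valuation of S. Conversely, if f is a valuation of S with maximum value 1, then the set of points with f-value 0 is a 1-ovoid of S. -/
open Classical

section AuxGraph
open SimpleGraph
variable {V : Type} {H : SimpleGraph V}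

lemma path_endpoint_edge {n u c c' : V} {P : H.Walk u n} (hP : P.IsPath)
    (h1 : s(u,c) ∈ P.edges) (h2 : s(u,c') ∈ P.edges) : c = c' := by
  cases P with
  | nil => simp at h1
  | cons h t =>
    rename_i w
    rw [Walk.edges_cons, List.mem_cons] at h1 h2
    have ht : u ∉ t.support := (Walk.cons_isPath_iff h t).mp hP |>.2
    have key : ∀ z : V, s(u,z) = s(u,w) ∨ s(u,z) ∈ t.edges → z = w := by
      rintro z (hz | hz)
      · rw [Sym2.eq_iff] at hz
        rcases hz with ⟨-, rfl⟩ | ⟨rfl, rfl⟩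
        · rfl
        · exact absurd rfl h.ne
      · exact absurd (t.fst_mem_support_of_mem_edges hz) ht
    rw [key c h1, key c' h2]

lemma path_endpoint_edge' {n u c c' : V} {P : H.Walk n u} (hP : P.IsPath)
    (h1 : s(u,c) ∈ P.edges) (h2 : s(u,c') ∈ P.edges) : c = c' := by
  apply path_endpoint_edge hP.reverse <;>
    rwa [Walk.edges_reverse, List.mem_reverse]

lemma dist_add_dist_le_length [DecidableEq V] {a b y : V} (W : H.Walk a b)
    (hy : y ∈ W.support) : H.dist a y + H.dist y b ≤ W.length := by
  have h2 : (W.takeUntil y hy).length + (W.dropUntil y hy).length = W.length := by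
    rw [← Walk.length_append, W.take_spec hy]
  have := H.dist_le (W.takeUntil y hy)
  have := H.dist_le (W.dropUntil y hy)
  omega

lemma length_rotate [DecidableEq V] {a u : V} (c : H.Walk a a) (h : u ∈ c.support) :
    (c.rotate u h).length = c.length := by
  have h2 : (c.takeUntil u h).length + (c.dropUntil u h).length = c.length := by
    rw [← Walk.length_append, c.take_spec h]
  simp only [Walk.rotate, Walk.length_append]
  omega

lemma egirth_le_of_ecc (hac : ¬ H.IsAcyclic) {n : V} {e : ℕ}
    (hreach : ∀ u, H.Reachable n u) (hdist : ∀ u, H.dist n u ≤ e) :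
    H.egirth ≤ 2 * e + 1 := by
  classical
  obtain ⟨a, w, hw, hlen⟩ := (exists_egirth_eq_length (G := H)).mpr hac
  -- choose u in the support maximizing dist n
  obtain ⟨u, huS, hmax⟩ := w.support.toFinset.exists_max_image (H.dist n)
    ⟨a, by simp [w.start_mem_support]⟩
  rw [List.mem_toFinset] at huS
  have hmax' : ∀ b ∈ w.support, H.dist n b ≤ H.dist n u := fun b hb =>
    hmax b (List.mem_toFinset.mpr hb)
  set w' := w.rotate u huS with hw'def
  have hw' : w'.IsCycle := hw.rotate huS
  have hlen' : w'.length = w.length := length_rotate w huS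
  have hmem' : ∀ z, z ∈ w'.support → z ∈ w.support := by
    intro z hz
    rw [Walk.support_eq_cons, List.mem_cons] at hz
    rcases hz with rfl | hz
    · exact huS
    · exact List.mem_of_mem_tail (((w.support_rotate u huS).mem_iff).mp hz)
  have h3 : 3 ≤ w'.length := hw'.three_le_length
  -- first vertex
  have hnn1 : ¬ w'.Nil := by rw [Walk.not_nil_iff_lt_length]; omega
  have hnn2 : ¬ w'.reverse.Nil := by
    rw [Walk.not_nil_iff_lt_length, Walk.length_reverse]; omega
  obtain ⟨c₁, hadj1, q, hq⟩ := (Walk.not_nil_iff).mp hnn1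
  obtain ⟨c₂, hadj2, r, hr⟩ := (Walk.not_nil_iff).mp hnn2
  have hc1sup : c₁ ∈ w.support := by
    apply hmem'
    rw [hq, Walk.support_cons]
    exact List.mem_cons_of_mem _ q.start_mem_support
  have hc2sup : c₂ ∈ w.support := by
    apply hmem'
    have : c₂ ∈ w'.reverse.support := by
      rw [hr, Walk.support_cons]
      exact List.mem_cons_of_mem _ r.start_mem_support
    rwa [Walk.support_reverse, List.mem_reverse] at this
  -- the two first/last edges are distinct
  have hnodup : w'.edges.Nodup := hw'.isCircuit.isTrail.edges_nodup
  have hE1 : w'.edges = s(u,c₁) :: q.edges := by rw [hq, Walk.edges_cons]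
  have hE2 : w'.edges = r.edges.reverse ++ [s(u,c₂)] := by
    have : w'.reverse.edges = s(u,c₂) :: r.edges := by rw [hr, Walk.edges_cons]
    rw [Walk.edges_reverse] at this
    rw [← List.reverse_reverse w'.edges, this, List.reverse_cons]
  have hrlen : r.edges ≠ [] := by
    have h1 : w'.reverse.length = r.length + 1 := by rw [hr, Walk.length_cons]
    rw [Walk.length_reverse] at h1
    have := r.length_edges
    intro hnil
    rw [hnil] at this
    simp at this
    omega
  have hrlen' : r.edges.reverse ≠ [] := by simpa using hrlen
  obtain ⟨b, B, hbB⟩ := List.exists_cons_of_ne_nil hrlen'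
  have hEeq : s(u,c₁) :: q.edges = b :: (B ++ [s(u,c₂)]) := by
    rw [← hE1, hE2, hbB]; simp
  have hqE : q.edges = B ++ [s(u,c₂)] := (List.cons.injEq _ _ _ _ ▸ hEeq).2
  have hmemq : s(u,c₂) ∈ q.edges := by rw [hqE]; simp
  have hnotq : s(u,c₁) ∉ q.edges := by
    rw [hE1] at hnodup
    exact (List.nodup_cons.mp hnodup).1
  have hceq : c₁ ≠ c₂ := by
    rintro rfl
    exact hnotq hmemq
  -- shortest path from n to u
  obtain ⟨P, hPp, hPl⟩ := (hreach u).exists_path_of_dist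
  -- choose the neighbor avoiding P's last edge
  obtain ⟨c, hadj, hcsup, hce⟩ : ∃ c, H.Adj u c ∧ c ∈ w.support ∧ s(u,c) ∉ P.edges := by
    by_cases hc1 : s(u,c₁) ∈ P.edges
    · refine ⟨c₂, hadj2, hc2sup, fun h => hceq (path_endpoint_edge' hPp hc1 h)⟩
    · exact ⟨c₁, hadj1, hc1sup, hc1⟩
  obtain ⟨Q, hQp, hQl⟩ := (hreach c).exists_path_of_dist
  have hQe : s(u,c) ∉ Q.edges := by
    intro h
    have hu : u ∈ Q.support := Q.fst_mem_support_of_mem_edges h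
    have hsplit := dist_add_dist_le_length Q hu
    rw [hQl] at hsplit
    have h1 : H.dist n c ≤ H.dist n u := hmax' c hcsup
    have h2 : H.dist u c ≠ 0 := by
      intro h0
      rcases (H.dist_eq_zero_iff_eq_or_not_reachable).mp h0 with rfl | hnr
      · exact hadj.ne rfl
      · exact hnr hadj.reachable
    omega
  -- the detour walk
  set W := P.reverse.append Q with hWdef
  have hWlen : W.length ≤ 2 * e := by
    rw [hWdef, Walk.length_append, Walk.length_reverse, hPl, hQl]
    have := hdist u
    have := hdist c
    omega
  have hWe : s(u,c) ∉ W.edges := by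
    rw [hWdef, Walk.edges_append, List.mem_append, Walk.edges_reverse, List.mem_reverse]
    rintro (h | h)
    · exact hce h
    · exact hQe h
  set T := W.toPath with hTdef
  have hTe : s(c,u) ∉ (T : H.Walk u c).edges := by
    rw [Sym2.eq_swap]
    exact fun h => hWe (Walk.edges_toPath_subset W h)
  have hcyc : (Walk.cons hadj.symm (T : H.Walk u c)).IsCycle :=
    SimpleGraph.Path.cons_isCycle T hadj.symm hTe
  have hTlen : (T : H.Walk u c).length ≤ W.length := by
    rw [hTdef]
    exact Walk.length_bypass_le W
  have hgle : H.egirth ≤ ((Walk.cons hadj.symm (T : H.Walk u c)).length : ℕ∞) := by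
    rw [egirth]
    exact iInf_le_of_le c <| iInf_le_of_le (Walk.cons hadj.symm (T : H.Walk u c)) <|
      iInf_le_of_le hcyc le_rfl
  have hfin : (Walk.cons hadj.symm (T : H.Walk u c)).length ≤ 2*e+1 := by
    rw [Walk.length_cons]; omega
  exact hgle.trans (by exact_mod_cast hfin)

lemma aux_exists_line {d : ℕ} (G : Geometry) (hd : 2 ≤ d) (hG : G.IsGenPolygon d) :
    Nonempty G.L := by
  have hac : ¬ G.incGraph.IsAcyclic := by
    intro h
    have h0 := h.girth_eq_zero
    have h4 := hG.2
    omega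
  obtain ⟨a, w, hw, -⟩ := (SimpleGraph.exists_egirth_eq_length).mpr hac
  have h3 : 3 ≤ w.length := hw.three_le_length
  have hnn : ¬ w.Nil := by rw [SimpleGraph.Walk.not_nil_iff_lt_length]; omega
  obtain ⟨b, hadj, t, -⟩ := (SimpleGraph.Walk.not_nil_iff).mp hnn
  rcases a with p | l
  · rcases b with p' | l
    · exact absurd hadj (by simp [Geometry.incGraph])
    · exact ⟨l⟩
  · exact ⟨l⟩

lemma aux_second_point {d : ℕ} (G : Geometry) (hd : 2 ≤ d) (hG : G.IsGenPolygon d)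
    {l : G.L} {x : G.P} (hx : G.I x l) (hu : ∀ y, G.I y l → y = x) : False := by
  classical
  set H := G.incGraph with hH
  have hediam : H.ediam = ((2*d : ℕ) : ℕ∞) := hG.1
  have hgirth : H.girth = 4*d := hG.2
  have hac : ¬ H.IsAcyclic := by
    intro h
    have h0 := h.girth_eq_zero
    omega
  have hegirth : H.egirth = ((4*d : ℕ) : ℕ∞) := by
    have hne : H.egirth ≠ ⊤ := fun h => hac (SimpleGraph.egirth_eq_top.mp h)
    rw [SimpleGraph.girth] at hgirth
    rw [← ENat.coe_toNat hne, hgirth]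
  have hreach : ∀ u w : G.P ⊕ G.L, H.Reachable u w := by
    intro u w
    apply SimpleGraph.reachable_of_edist_ne_top
    intro htop
    have h1 : H.edist u w ≤ H.ediam := SimpleGraph.edist_le_ediam
    rw [htop, hediam] at h1
    exact (ENat.coe_ne_top _) (top_le_iff.mp h1)
  have hdistall : ∀ u w, H.dist u w ≤ 2*d := by
    intro u w
    have h1 : H.edist u w ≤ ((2*d : ℕ) : ℕ∞) := hediam ▸ SimpleGraph.edist_le_ediam
    have h2 := ENat.toNat_le_toNat h1 (ENat.coe_ne_top _)
    simpa [SimpleGraph.dist] using h2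
  set v := (Sum.inr l : G.P ⊕ G.L) with hv
  set n := (Sum.inl x : G.P ⊕ G.L) with hn
  have hnb : ∀ z, H.Adj v z → z = n := by
    rintro (p | m) h
    · have hI : G.I p l := h
      exact congrArg Sum.inl (hu p hI)
    · exact absurd h (by simp [hH, Geometry.incGraph])
  have hkey : ∀ u, H.dist n u ≤ 2*d - 1 := by
    intro u
    by_cases huv : u = v
    · subst huv
      have hadj : H.Adj n v := hx
      have h1 := SimpleGraph.dist_eq_one_iff_adj.mpr hadj
      omega
    · obtain ⟨W, hWl⟩ := (hreach v u).exists_walk_length_eq_dist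
      have hnn : ¬ W.Nil := SimpleGraph.Walk.not_nil_of_ne (fun h => huv h.symm)
      obtain ⟨z, hadj, t, ht⟩ := (SimpleGraph.Walk.not_nil_iff).mp hnn
      have hz := hnb z hadj
      subst hz
      have h1 : H.dist n u ≤ t.length := SimpleGraph.dist_le t
      have h2 : W.length = t.length + 1 := by rw [ht, SimpleGraph.Walk.length_cons]
      have h3 := hdistall v u
      omega
  have hfin := egirth_le_of_ecc hac (hreach n) hkey
  rw [hegirth] at hfin
  have hfin2 : ((4*d : ℕ) : ℕ∞) ≤ ((2*(2*d-1)+1 : ℕ) : ℕ∞) := by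
    push_cast
    exact_mod_cast hfin
  have := Nat.cast_le.mp hfin2
  omega

end AuxGraph

/-- The indicator-style map of a 1-ovoid (0 on the ovoid, 1 elsewhere) is a
valuation of a generalized 2d-gon; conversely, the zero set of any valuation with
maximum value 1 is a 1-ovoid. -/
theorem ovoidal_valuation_correspondence (G : Geometry) (d : ℕ) (hd : 2 ≤ d)
    (hG : G.IsGenPolygon d) :
    (∀ O : Set G.P, G.IsOvoid1 O →
      G.IsValuation (fun x => if x ∈ O then 0 else 1)) ∧
    (∀ f : G.P → ℕ, G.IsValuation f → G.Mf f = 1 →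
      G.IsOvoid1 {x : G.P | f x = 0}) := by
  constructor
  · -- an ovoid gives a valuation
    intro O hO
    set f : G.P → ℕ := fun x => if x ∈ O then 0 else 1 with hf
    obtain ⟨l₀⟩ := aux_exists_line G hd hG
    obtain ⟨p₀, ⟨hp₀l, hp₀O⟩, -⟩ := hO l₀
    have hub : ∀ p, f p ≤ 1 := by
      intro p
      simp only [hf]
      split <;> omega
    have hMf : G.Mf f ≤ 1 := by
      have : Nonempty G.P := ⟨p₀⟩
      exact ciSup_le hub
    constructor
    · exact ⟨p₀, by simp [hf, hp₀O]⟩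
    · intro l
      obtain ⟨p, ⟨hpl, hpO⟩, hpun⟩ := hO l
      refine ⟨p, ⟨hpl, ?_⟩, ?_⟩
      · intro y hyl hyp
        have hyO : y ∉ O := fun hyO => hyp (hpun y ⟨hyl, hyO⟩)
        simp [hf, hyO, hpO]
      · rintro x' ⟨hx'l, hx'prop⟩
        by_contra hne
        by_cases hx'O : x' ∈ O
        · exact hne (hpun x' ⟨hx'l, hx'O⟩)
        · have h1 := hx'prop p hpl (fun h => hne h.symm)
          simp [hf, hpO, hx'O] at h1
    · intro x hx l₁ l₂ hxl₁ hxl₂ ⟨y, hyl, hy⟩ _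
      exfalso
      have h1 : f x = 0 := by have := lt_of_lt_of_le hx hMf; omega
      omega
  · -- a valuation with max 1 gives an ovoid
    intro f hf hMf
    have hbdd : BddAbove (Set.range f) := by
      by_contra hb
      have h0 : G.Mf f = 0 := by
        rw [Geometry.Mf, iSup, csSup_of_not_bddAbove hb, csSup_empty]
        rfl
      omega
    have hle : ∀ p, f p ≤ 1 := by
      intro p
      have : f p ≤ G.Mf f := le_ciSup hbdd p
      omega
    intro l
    obtain ⟨x, ⟨hxl, hxprop⟩, hxun⟩ := hf.line_prop l
    have hfx : f x = 0 := by
      by_contra h0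
      have hx1 : f x = 1 := by have := hle x; omega
      have hexy : ∃ y, G.I y l ∧ y ≠ x := by
        by_contra hny
        push_neg at hny
        exact aux_second_point G hd hG hxl hny
      obtain ⟨y, hyl, hyx⟩ := hexy
      have := hxprop y hyl hyx
      have := hle y
      omega
    refine ⟨x, ⟨hxl, hfx⟩, ?_⟩
    rintro y ⟨hyl, hy0⟩
    by_contra hne
    have := hxprop y hyl hne
    simp only [Set.mem_setOf_eq] at hy0
    omega
end

section
/- Let S be a generalized 2d-gon that is a full subgeometry of a generalized 2d-gon S', and let x be a point of S' at distance m from the point set P of S (in the point graph of S'). Then m ≤ d − 1, and the map f_x(y) = d(x, y) − m on points y of S is a valuation of S with maximum value d − m. -/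
open SimpleGraph Walk

variable {V : Type} {B : SimpleGraph V}

lemma girth_le_cycle {a : V} {c : B.Walk a a} (hc : c.IsCycle) : B.girth ≤ c.length := by
  have h1 : B.egirth ≤ (c.length : ℕ∞) := by
    unfold SimpleGraph.egirth
    exact iInf_le_of_le a (iInf_le_of_le c (iInf_le_of_le hc le_rfl))
  have := ENat.toNat_le_toNat h1 (by simp)
  simpa [SimpleGraph.girth] using this

lemma cycle_of_two_paths : ∀ {u v : V} (p q : B.Walk u v), p.IsPath → q.IsPath → p ≠ q →
    ∃ (a : V) (c : B.Walk a a), c.IsCycle ∧ c.length ≤ p.length + q.length := by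
  classical
  intro u v p q hp hq hne
  induction p with
  | nil =>
    exact absurd ((Walk.isPath_iff_eq_nil (p := q)).mp hq).symm hne
  | @cons u w v h p' ih =>
    have hp' := (Walk.cons_isPath_iff _ _).mp hp
    by_cases he : s(u, w) ∈ q.edges
    · cases q with
      | nil => rw [Walk.isPath_iff_eq_nil] at hp; exact absurd hp (by simp)
      | @cons _ w₂ _ h₂ q' =>
        have hq' := (Walk.cons_isPath_iff _ _).mp hq
        have hw : w = w₂ := by
          have he2 : s(u,w) = s(u,w₂) ∨ s(u, w) ∈ q'.edges := by
            simpa [Walk.edges_cons] using he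
          rcases he2 with h' | h'
          · rcases Sym2.eq_iff.mp h' with ⟨_, rfl⟩ | ⟨rfl, rfl⟩
            · rfl
            · exact (hq'.2 (Walk.start_mem_support q')).elim
          · exact (hq'.2 (Walk.fst_mem_support_of_mem_edges q' h')).elim
        subst hw
        have hne' : p' ≠ q' := by
          intro hh; subst hh; exact hne rfl
        obtain ⟨a, c, hc, hlen⟩ := ih q' hp'.1 hq'.1 hne'
        exact ⟨a, c, hc, by simp only [Walk.length_cons]; omega⟩
    · have hup : s(u, w) ∉ p'.edges := fun hh =>
        hp'.2 (Walk.fst_mem_support_of_mem_edges p' hh)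
      have hr : s(u, w) ∉ (p'.append q.reverse).edges := by
        rw [Walk.edges_append]
        intro hh
        rcases List.mem_append.mp hh with hh | hh
        · exact hup hh
        · rw [Walk.edges_reverse, List.mem_reverse] at hh; exact he hh
      set r : B.Walk w u := p'.append q.reverse with hrdef
      have hnotin : ¬ s(u, w) ∈ (r.toPath : B.Walk w u).edges := fun hh =>
        hr (Walk.edges_toPath_subset r hh)
      have hcyc := SimpleGraph.Path.cons_isCycle r.toPath h hnotin
      refine ⟨u, Walk.cons h (r.toPath : B.Walk w u), hcyc, ?_⟩
      have h3 : (r.toPath : B.Walk w u).length ≤ r.length := Walk.length_bypass_le r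
      have h4 : r.length = p'.length + q.reverse.length := Walk.length_append _ _
      simp only [Walk.length_cons, Walk.length_reverse] at *
      omega

lemma dist_le_of_mem_support {u v z : V} (p : B.Walk u v) (hz : z ∈ p.support) :
    B.dist u z ≤ p.length := by
  classical
  exact le_trans (SimpleGraph.dist_le (p.takeUntil z hz)) (Walk.length_takeUntil_le p hz)

lemma unique_nbr {g : ℕ} (hgirth : B.girth = g) {v c s t : V} (hs : B.Adj c s) (ht : B.Adj c t)
    (hrs : B.Reachable v s) (hrt : B.Reachable v t) {k : ℕ}
    (hc : B.dist v c = k) (hds : B.dist v s + 1 = k) (hdt : B.dist v t + 1 = k)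
    (h2 : 2 * k < g) : s = t := by
  by_contra hst
  obtain ⟨Ps, hPs, hPsl⟩ := hrs.exists_path_of_dist
  obtain ⟨Pt, hPt, hPtl⟩ := hrt.exists_path_of_dist
  have hcs : c ∉ Ps.support := by
    intro hmem
    have := dist_le_of_mem_support Ps hmem
    omega
  have hct : c ∉ Pt.support := by
    intro hmem
    have := dist_le_of_mem_support Pt hmem
    omega
  set P1 : B.Walk c v := Walk.cons hs Ps.reverse with hP1
  set P2 : B.Walk c v := Walk.cons ht Pt.reverse with hP2
  have hP1p : P1.IsPath := by
    rw [hP1, Walk.cons_isPath_iff]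
    refine ⟨hPs.reverse, ?_⟩
    rw [Walk.support_reverse, List.mem_reverse]
    exact hcs
  have hP2p : P2.IsPath := by
    rw [hP2, Walk.cons_isPath_iff]
    refine ⟨hPt.reverse, ?_⟩
    rw [Walk.support_reverse, List.mem_reverse]
    exact hct
  have hne : P1 ≠ P2 := by
    intro hh
    have := congrArg Walk.support hh
    rw [hP1, hP2, Walk.support_cons, Walk.support_cons,
      Walk.support_eq_cons Ps.reverse, Walk.support_eq_cons Pt.reverse] at this
    simp only [List.cons.injEq] at this
    exact hst this.2.1
  obtain ⟨a, cyc, hcyc, hlen⟩ := cycle_of_two_paths P1 P2 hP1p hP2p hne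
  have hg := girth_le_cycle hcyc
  rw [hgirth] at hg
  have l1 : P1.length = Ps.length + 1 := by simp [hP1]
  have l2 : P2.length = Pt.length + 1 := by simp [hP2]
  omega
namespace IVAux
open SimpleGraph Walk Sum

variable {H : Geometry}

lemma adj_isLeft {a b : H.P ⊕ H.L} (h : H.incGraph.Adj a b) : a.isLeft = !b.isLeft := by
  cases a <;> cases b <;> simp_all [Geometry.incGraph]

lemma adj_inl_inl {p q : H.P} (h : H.incGraph.Adj (inl p) (inl q)) : False := h

lemma adj_inr_inr {p q : H.L} (h : H.incGraph.Adj (inr p) (inr q)) : False := h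

lemma adj_inl_inr {p : H.P} {l : H.L} (h : H.incGraph.Adj (inl p) (inr l)) : H.I p l := h

lemma adj_inr_inl {p : H.P} {l : H.L} (h : H.incGraph.Adj (inr l) (inl p)) : H.I p l := h

lemma I_adj {p : H.P} {l : H.L} (h : H.I p l) : H.incGraph.Adj (inl p) (inr l) := h

lemma walk_parity {a b : H.P ⊕ H.L} (w : H.incGraph.Walk a b) :
    (a.isLeft = b.isLeft) ↔ Even w.length := by
  induction w with
  | nil => simp
  | @cons a c b h w ih =>
    have ha := adj_isLeft h
    rw [Walk.length_cons, Nat.even_add_one, ← ih, ha]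
    cases c.isLeft <;> cases b.isLeft <;> simp

lemma dist_parity {a b : H.P ⊕ H.L} (h : H.incGraph.Reachable a b) :
    (a.isLeft = b.isLeft) ↔ Even (H.incGraph.dist a b) := by
  obtain ⟨w, hw⟩ := h.exists_walk_length_eq_dist
  rw [← hw]
  exact walk_parity w

lemma nbr_dist_cases (hconn : H.incGraph.Connected) {a b : H.P ⊕ H.L} (v : H.P ⊕ H.L)
    (hadj : H.incGraph.Adj a b) :
    H.incGraph.dist v b = H.incGraph.dist v a + 1 ∨
    H.incGraph.dist v a = H.incGraph.dist v b + 1 := by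
  have t1 : H.incGraph.dist v b ≤ H.incGraph.dist v a + 1 := by
    have := hconn.dist_triangle (u := v) (v := a) (w := b)
    rwa [SimpleGraph.dist_eq_one_iff_adj.mpr hadj] at this
  have t2 : H.incGraph.dist v a ≤ H.incGraph.dist v b + 1 := by
    have := hconn.dist_triangle (u := v) (v := b) (w := a)
    rwa [SimpleGraph.dist_eq_one_iff_adj.mpr hadj.symm] at this
  have hpa := dist_parity (hconn v a)
  have hpb := dist_parity (hconn v b)
  have hab := adj_isLeft hadj
  have hne : H.incGraph.dist v a ≠ H.incGraph.dist v b := by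
    intro hh
    rw [hh] at hpa
    rw [hab] at hpa
    cases hvb : b.isLeft <;> cases hv : v.isLeft <;>
      rw [hvb] at hpa hpb <;> rw [hv] at hpa hpb <;>
      simp_all [Nat.even_iff, Nat.odd_iff] <;> omega
  omega

lemma pt_of_inc : ∀ (n : ℕ) {x y : H.P} (w : H.incGraph.Walk (inl x) (inl y)),
    w.length = n → ∃ pw : H.pointGraph.Walk x y, 2 * pw.length ≤ n := by
  intro n
  induction n using Nat.strong_induction_on with
  | _ n ih =>
    intro x y w hl
    cases w with
    | nil => exact ⟨Walk.nil, by simp⟩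
    | @cons _ c _ h w' =>
      cases c with
      | inl p => exact (adj_inl_inl h).elim
      | inr l =>
        cases w' with
        | @cons _ c₂ _ h₂ w'' =>
          cases c₂ with
          | inr l₂ => exact (adj_inr_inr h₂).elim
          | inl x₁ =>
            have hlen : w''.length = n - 2 := by simp at hl; omega
            have hn2 : n - 2 < n := by simp at hl; omega
            obtain ⟨pw, hpw⟩ := ih (n - 2) hn2 w'' hlen
            by_cases hx : x = x₁
            · subst hx
              exact ⟨pw, by simp at hl; omega⟩
            · refine ⟨Walk.cons ⟨hx, l, adj_inl_inr h, adj_inr_inl h₂⟩ pw, ?_⟩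
              show 2 * (pw.length + 1) ≤ n
              simp at hl
              omega

lemma inc_of_pt {x y : H.P} (pw : H.pointGraph.Walk x y) :
    ∃ w : H.incGraph.Walk (inl x) (inl y), w.length = 2 * pw.length := by
  induction pw with
  | nil => exact ⟨Walk.nil, rfl⟩
  | @cons x x₁ y h pw ih =>
    obtain ⟨_, l, h1, h2⟩ := h
    obtain ⟨w, hw⟩ := ih
    exact ⟨Walk.cons (I_adj h1) (Walk.cons (I_adj h2).symm w),
      by show _ = 2 * (pw.length + 1); simp only [Walk.length_cons, hw]; ring⟩

lemma incdist_eq_two_mul (hconn : H.incGraph.Connected) (x y : H.P) :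
    H.incGraph.dist (inl x) (inl y) = 2 * H.dist x y := by
  obtain ⟨w, hw⟩ := (hconn (inl x) (inl y)).exists_walk_length_eq_dist
  obtain ⟨pw, hpw⟩ := pt_of_inc w.length w rfl
  have hreach : H.pointGraph.Reachable x y := ⟨pw⟩
  obtain ⟨gw, hgw⟩ := hreach.exists_walk_length_eq_dist
  obtain ⟨iw, hiw⟩ := inc_of_pt gw
  have h1 : H.incGraph.dist (inl x) (inl y) ≤ 2 * H.dist x y := by
    have := SimpleGraph.dist_le iw
    rw [hiw, hgw] at this
    exact this
  have h2 : H.pointGraph.dist x y ≤ pw.length := SimpleGraph.dist_le pw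
  have : H.dist x y = H.pointGraph.dist x y := rfl
  omega

end IVAux
namespace IVAux
open SimpleGraph Walk Sum

variable {H : Geometry} {d : ℕ}

lemma gp_not_acyclic (hP : H.IsGenPolygon d) (hd : 2 ≤ d) : ¬ H.incGraph.IsAcyclic := by
  intro ha
  have := ha.girth_eq_zero
  rw [hP.2] at this
  omega

lemma gp_nonempty (hP : H.IsGenPolygon d) (hd : 2 ≤ d) : Nonempty (H.P ⊕ H.L) := by
  obtain ⟨a, w, hw, hl⟩ := SimpleGraph.exists_girth_eq_length.mpr (gp_not_acyclic hP hd)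
  exact ⟨a⟩

lemma gp_conn (hP : H.IsGenPolygon d) (hd : 2 ≤ d) : H.incGraph.Connected := by
  have hne := gp_nonempty hP hd
  refine ⟨fun u v => ?_⟩
  apply SimpleGraph.reachable_of_edist_ne_top
  have h1 : H.incGraph.edist u v ≤ ((2 * d : ℕ) : ℕ∞) := hP.1 ▸ SimpleGraph.edist_le_ediam
  exact fun htop => (ENat.coe_ne_top (2 * d)) (top_le_iff.mp (htop ▸ h1))

lemma gp_dist_le (hP : H.IsGenPolygon d) (hd : 2 ≤ d) (u v : H.P ⊕ H.L) :
    H.incGraph.dist u v ≤ 2 * d := by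
  have h1 : H.incGraph.edist u v ≤ ((2 * d : ℕ) : ℕ∞) := hP.1 ▸ SimpleGraph.edist_le_ediam
  have h2 := ENat.toNat_le_toNat h1 (ENat.coe_ne_top _)
  simpa [SimpleGraph.dist] using h2

/-- every vertex of a generalized polygon has a vertex at distance 2d -/
lemma gp_far (hP : H.IsGenPolygon d) (hd : 2 ≤ d) (v : H.P ⊕ H.L) :
    ∃ w, H.incGraph.dist v w = 2 * d := by
  classical
  have hconn := gp_conn hP hd
  by_contra hfar
  push_neg at hfar
  have hle : ∀ w, H.incGraph.dist v w ≤ 2 * d - 1 := by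
    intro w
    have h1 := gp_dist_le hP hd v w
    have h2 := hfar w
    omega
  obtain ⟨a, C, hC, hCl⟩ := SimpleGraph.exists_girth_eq_length.mpr (gp_not_acyclic hP hd)
  rw [hP.2] at hCl
  -- pick a vertex of C maximizing distance from v
  obtain ⟨z, hz⟩ : ∃ z, z ∈ C.support.argmax (H.incGraph.dist v) := by
    cases h : C.support.argmax (H.incGraph.dist v) with
    | none => exact absurd (List.argmax_eq_none.mp h) (C.support_ne_nil)
    | some z => exact ⟨z, by simp [h]⟩
  have hzmem : z ∈ C.support := List.argmax_mem hz
  have hzmax : ∀ b ∈ C.support, H.incGraph.dist v b ≤ H.incGraph.dist v z :=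
    fun b hb => List.le_of_mem_argmax hb hz
  set M := H.incGraph.dist v z with hM
  have hC' : (C.rotate z hzmem).IsCycle := hC.rotate hzmem
  have hC'l : (C.rotate z hzmem).length = C.length := by
    have := (Walk.rotate_darts C z hzmem).perm.length_eq
    simpa [Walk.length_darts] using this
  have hC'mem : ∀ b, b ∈ (C.rotate z hzmem).support.tail → b ∈ C.support := by
    intro b hb
    have := (Walk.support_rotate C z hzmem).perm.mem_iff.mp hb
    exact List.mem_of_mem_tail this
  set C' := C.rotate z hzmem with hC'def
  clear_value C'
  cases C' with
  | nil => exact hC'.not_of_nil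
  | @cons _ s₁ _ h₁ rest =>
    have hrest := (Walk.cons_isCycle_iff rest h₁).mp hC'
    have hs₁mem : s₁ ∈ C.support := by
      apply hC'mem
      rw [Walk.support_cons]
      rw [Walk.support_eq_cons rest]
      simp
    -- penultimate vertex
    rcases hrev : rest.reverse with _ | @⟨_, t₁, _, h₂, rest₂⟩
    · -- rest.reverse = nil : impossible since z ≠ s₁
      have : rest.length = 0 := by
        have := congrArg Walk.length hrev
        simpa using this
      simp [Walk.length_cons] at hC'l
      omega
    · have ht₁edge : s(z, t₁) ∈ rest.edges := by
        have : s(z, t₁) ∈ rest.reverse.edges := by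
          rw [hrev, Walk.edges_cons]
          exact List.mem_cons_self
        rwa [Walk.edges_reverse, List.mem_reverse] at this
      have ht₁mem : t₁ ∈ C.support := by
        apply hC'mem
        rw [Walk.support_cons]
        have : t₁ ∈ rest.support := by
          have : t₁ ∈ rest.reverse.support := by
            rw [hrev, Walk.support_cons, Walk.support_eq_cons rest₂]
            simp
          rwa [Walk.support_reverse, List.mem_reverse] at this
        simp [this]
      have hst : s₁ ≠ t₁ := by
        intro hh
        rw [← hh] at ht₁edge
        exact hrest.2 ht₁edge
      have hadj₂ : H.incGraph.Adj z t₁ := h₂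
      have hds : H.incGraph.dist v s₁ + 1 = M := by
        rcases nbr_dist_cases hconn v h₁ with hh | hh
        · have := hzmax s₁ hs₁mem; omega
        · omega
      have hdt : H.incGraph.dist v t₁ + 1 = M := by
        rcases nbr_dist_cases hconn v hadj₂ with hh | hh
        · have := hzmax t₁ ht₁mem; omega
        · omega
      have hMle : M ≤ 2 * d - 1 := hle z
      exact hst (unique_nbr hP.2 h₁ hadj₂ (hconn v s₁) (hconn v t₁) hM.symm hds hdt (by omega))

/-- minimum degree two -/
lemma gp_two_nbrs (hP : H.IsGenPolygon d) (hd : 2 ≤ d) (a : H.P ⊕ H.L) :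
    ∃ b₁ b₂, b₁ ≠ b₂ ∧ H.incGraph.Adj a b₁ ∧ H.incGraph.Adj a b₂ := by
  have hconn := gp_conn hP hd
  obtain ⟨w, hw⟩ := gp_far hP hd a
  obtain ⟨P, hPl⟩ := (hconn a w).exists_walk_length_eq_dist
  cases P with
  | nil => simp [← hPl] at hw; omega
  | @cons _ b₁ _ h₁ rest =>
    by_contra hcon
    push_neg at hcon
    have huniq : ∀ b, H.incGraph.Adj a b → b = b₁ := by
      intro b hb
      by_contra hne
      exact (hcon b b₁ hne hb h₁).elim
    obtain ⟨w', hw'⟩ := gp_far hP hd b₁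
    have hwa : w' ≠ a := by
      intro hh
      rw [hh] at hw'
      rw [SimpleGraph.dist_comm, SimpleGraph.dist_eq_one_iff_adj.mpr h₁] at hw'
      omega
    obtain ⟨R, hRl⟩ := (hconn a w').exists_walk_length_eq_dist
    cases R with
    | nil => exact hwa rfl
    | @cons _ b _ h' R' =>
      have hb := huniq b h'
      subst hb
      have : H.incGraph.dist b w' ≤ R'.length := SimpleGraph.dist_le R'
      rw [hw'] at this
      have hR : R'.length + 1 = H.incGraph.dist a w' := by
        simpa [Walk.length_cons] using hRl
      have := gp_dist_le hP hd a w'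
      omega

end IVAux
namespace IVAux
open SimpleGraph Walk Sum

variable {H : Geometry} {d : ℕ}

lemma dist_pt_line_odd (hP : H.IsGenPolygon d) (hd : 2 ≤ d) (x : H.P) (l : H.L) :
    ¬ Even (H.incGraph.dist (inl x) (inr l)) := by
  have hconn := gp_conn hP hd
  have := dist_parity (hconn (inl x) (inr l))
  simp at this
  exact Nat.not_even_iff_odd.mpr this

/-- the unique nearest point of a line, incidence-graph version -/
lemma line_nearest (hP : H.IsGenPolygon d) (hd : 2 ≤ d) (x : H.P) (l : H.L) :
    ∃ p : H.P, H.I p l ∧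
      H.incGraph.dist (inl x) (inl p) + 1 = H.incGraph.dist (inl x) (inr l) ∧
      H.incGraph.dist (inl x) (inr l) ≤ 2 * d - 1 ∧
      ∀ q : H.P, H.I q l → q ≠ p →
        H.incGraph.dist (inl x) (inl q) = H.incGraph.dist (inl x) (inl p) + 2 := by
  have hconn := gp_conn hP hd
  set D := H.incGraph.dist (inl x) (inr l) with hD
  have hodd : ¬ Even D := dist_pt_line_odd hP hd x l
  have hDle : D ≤ 2 * d - 1 := by
    have h1 := gp_dist_le hP hd (inl x) (inr l)
    rcases Nat.even_or_odd D with he | ho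
    · exact absurd he hodd
    · rw [Nat.odd_iff] at ho; omega
  obtain ⟨P, hPp, hPl⟩ := (hconn (inl x) (inr l)).exists_path_of_dist
  rcases hrev : P.reverse with _ | @⟨_, c, _, h₂, Q⟩
  cases c with
  | inr l₂ => exact (adj_inr_inr h₂).elim
  | inl p =>
    have hIp : H.I p l := adj_inr_inl h₂
    have hdp : H.incGraph.dist (inl x) (inl p) + 1 = D := by
      have hQ : Q.reverse.length = D - 1 := by
        have := congrArg Walk.length hrev
        simp only [Walk.length_reverse, Walk.length_cons] at this ⊢
        omega
      have h1 : H.incGraph.dist (inl x) (inl p) ≤ D - 1 :=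
        hQ ▸ SimpleGraph.dist_le Q.reverse
      rcases nbr_dist_cases hconn (inl x) h₂ with hh | hh
      · omega
      · rw [← hD] at hh
        have hD1 : 1 ≤ D := by
          rcases Nat.even_or_odd D with he | ho
          · exact absurd he hodd
          · rw [Nat.odd_iff] at ho; omega
        omega
    refine ⟨p, hIp, hdp, hDle, fun q hq hqp => ?_⟩
    have hadjq : H.incGraph.Adj (inr l) (inl q) := hq
    rcases nbr_dist_cases hconn (inl x) hadjq with hh | hh
    · rw [← hD] at hh; omega
    · -- q would be a second nearest neighbor: contradiction
      exfalso
      apply hqp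
      have : (inl q : H.P ⊕ H.L) = inl p := by
        apply unique_nbr (g := 4 * d) hP.2 hadjq h₂ (hconn _ _) (hconn _ _)
          (k := D) hD.symm (by omega) hdp (by omega)
      exact inl.inj this

/-- point-graph version of the nearest-point lemma -/
lemma line_nearest_pt (hP : H.IsGenPolygon d) (hd : 2 ≤ d) (x : H.P) (l : H.L) :
    ∃ p : H.P, H.I p l ∧ H.dist x p ≤ d - 1 ∧
      2 * H.dist x p + 1 = H.incGraph.dist (inl x) (inr l) ∧
      ∀ q : H.P, H.I q l → q ≠ p → H.dist x q = H.dist x p + 1 := by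
  have hconn := gp_conn hP hd
  obtain ⟨p, hIp, hdp, hDle, huniq⟩ := line_nearest hP hd x l
  have e1 := incdist_eq_two_mul hconn x p
  refine ⟨p, hIp, by omega, by omega, fun q hq hqp => ?_⟩
  have e2 := incdist_eq_two_mul hconn x q
  have := huniq q hq hqp
  omega

lemma dist_pt_le (hP : H.IsGenPolygon d) (hd : 2 ≤ d) (x y : H.P) : H.dist x y ≤ d := by
  have := gp_dist_le hP hd (inl x) (inl y)
  have e := incdist_eq_two_mul (gp_conn hP hd) x y
  omega

/-- uniqueness of the line through a point containing a closer point -/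
lemma dec_line_unique (hP : H.IsGenPolygon d) (hd : 2 ≤ d) (x q : H.P) {k : ℕ}
    (hk : H.dist x q = k) (hkd : k < d) (l₁ l₂ : H.L) (hi₁ : H.I q l₁) (hi₂ : H.I q l₂)
    (y₁ : H.P) (hy₁ : H.I y₁ l₁) (hd₁ : H.dist x y₁ + 1 = k)
    (y₂ : H.P) (hy₂ : H.I y₂ l₂) (hd₂ : H.dist x y₂ + 1 = k) : l₁ = l₂ := by
  have hconn := gp_conn hP hd
  have eq := incdist_eq_two_mul hconn x q
  have ey₁ := incdist_eq_two_mul hconn x y₁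
  have ey₂ := incdist_eq_two_mul hconn x y₂
  have hD₁ : H.incGraph.dist (inl x) (inr l₁) + 1 = 2 * k := by
    rcases nbr_dist_cases hconn (inl x) (I_adj hy₁) with hh | hh <;>
    rcases nbr_dist_cases hconn (inl x) (I_adj hi₁) with hh2 | hh2 <;> omega
  have hD₂ : H.incGraph.dist (inl x) (inr l₂) + 1 = 2 * k := by
    rcases nbr_dist_cases hconn (inl x) (I_adj hy₂) with hh | hh <;>
    rcases nbr_dist_cases hconn (inl x) (I_adj hi₂) with hh2 | hh2 <;> omega
  have : (inr l₁ : H.P ⊕ H.L) = inr l₂ := by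
    apply unique_nbr (g := 4 * d) hP.2 (I_adj hi₁) (I_adj hi₂)
      (hconn _ _) (hconn _ _) (k := 2 * k) (by omega) hD₁ hD₂ (by omega)
  exact inr.inj this

lemma gp_exists_edge (hP : H.IsGenPolygon d) (hd : 2 ≤ d) :
    ∃ (p : H.P) (l : H.L), H.I p l := by
  obtain ⟨a, C, hC, hCl⟩ := SimpleGraph.exists_girth_eq_length.mpr (gp_not_acyclic hP hd)
  cases C with
  | nil => exact hC.not_of_nil.elim
  | @cons _ b _ h rest =>
    cases a with
    | inl p =>
      cases b with
      | inl p₂ => exact (adj_inl_inl h).elim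
      | inr l => exact ⟨p, l, adj_inl_inr h⟩
    | inr l =>
      cases b with
      | inr l₂ => exact (adj_inr_inr h).elim
      | inl p => exact ⟨p, l, adj_inr_inl h⟩

end IVAux

namespace IVMain
open SimpleGraph Walk Sum IVAux

variable {G : Geometry} {d : ℕ} {PS : Set G.P} {LS : Set G.L}

lemma step_up (hd : 2 ≤ d) (hG : G.IsGenPolygon d)
    (hfull : G.IsFullSub PS LS) (hS : (G.sub PS LS).IsGenPolygon d)
    (x : G.P) (q : G.P) (hq : q ∈ PS) {k : ℕ} (hk : G.dist x q = k) (hkd : k < d) :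
    ∃ y ∈ PS, G.dist x y = k + 1 := by
  have hconn' := gp_conn hG hd
  -- q is on two distinct lines of S
  obtain ⟨b₁, b₂, hbne, ha₁, ha₂⟩ := gp_two_nbrs hS hd (inl (⟨q, hq⟩ : (G.sub PS LS).P))
  cases b₁ with
  | inl p' => exact (adj_inl_inl ha₁).elim
  | inr l₁ =>
  cases b₂ with
  | inl p' => exact (adj_inl_inl ha₂).elim
  | inr l₂ =>
  have hI₁ : G.I q l₁.1 := adj_inl_inr (H := G.sub PS LS) ha₁
  have hI₂ : G.I q l₂.1 := adj_inl_inr (H := G.sub PS LS) ha₂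
  have heq : G.incGraph.dist (inl x) (inl q) = 2 * k :=
    hk ▸ incdist_eq_two_mul hconn' x q
  -- find a line of S through q at incidence distance 2k+1 from x
  have hline : ∃ l : LS, G.I q l.1 ∧ G.incGraph.dist (inl x) (inr l.1) = 2 * k + 1 := by
    rcases nbr_dist_cases hconn' (inl x) (I_adj hI₁) with h₁ | h₁
    · exact ⟨l₁, hI₁, by omega⟩
    · rcases nbr_dist_cases hconn' (inl x) (I_adj hI₂) with h₂ | h₂
      · exact ⟨l₂, hI₂, by omega⟩
      · exfalso
        have : (inr l₁.1 : G.P ⊕ G.L) = inr l₂.1 := by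
          apply unique_nbr (g := 4 * d) hG.2 (I_adj hI₁) (I_adj hI₂)
            (hconn' _ _) (hconn' _ _) (k := 2 * k) heq (by omega) (by omega) (by omega)
        exact hbne (by rw [Subtype.ext (inr.inj this)])
  obtain ⟨l, hIl, hDl⟩ := hline
  -- q is the unique nearest point of l
  obtain ⟨p, hIp, _, h2p, huniqp⟩ := line_nearest_pt hG hd x l.1
  have hqp : q = p := by
    by_contra hqp
    have := huniqp q hIl hqp
    omega
  -- a second point of l in S
  obtain ⟨c₁, c₂, hcne, hc₁, hc₂⟩ := gp_two_nbrs hS hd (inr l)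
  cases c₁ with
  | inr l' => exact (adj_inr_inr hc₁).elim
  | inl y₁ =>
  cases c₂ with
  | inr l' => exact (adj_inr_inr hc₂).elim
  | inl y₂ =>
  have hy₁ : G.I y₁.1 l.1 := adj_inr_inl (H := G.sub PS LS) hc₁
  have hy₂ : G.I y₂.1 l.1 := adj_inr_inl (H := G.sub PS LS) hc₂
  have hy : ∃ y : PS, G.I y.1 l.1 ∧ y.1 ≠ q := by
    by_cases h1 : y₁.1 = q
    · refine ⟨y₂, hy₂, ?_⟩
      intro h2
      exact hcne (by rw [Subtype.ext (h1.trans h2.symm)])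
    · exact ⟨y₁, hy₁, h1⟩
  obtain ⟨y, hyI, hyq⟩ := hy
  refine ⟨y.1, y.2, ?_⟩
  have := huniqp y.1 hyI (by rw [← hqp]; exact hyq)
  omega

end IVMain

/-- If a generalized 2d-gon S is a full subgeometry of a generalized 2d-gon S' and
x is a point of S' at distance m from the point set of S, then m ≤ d − 1 and
f_x(y) = d(x, y) − m is a valuation of S with maximum value d − m. -/
theorem induced_valuation (G : Geometry) (d : ℕ) (hd : 2 ≤ d)
    (hG : G.IsGenPolygon d) (PS : Set G.P) (LS : Set G.L)
    (hfull : G.IsFullSub PS LS) (hS : (G.sub PS LS).IsGenPolygon d)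
    (x : G.P) (m : ℕ) (hm : m = G.distSet x PS) :
    m ≤ d - 1 ∧
    (G.sub PS LS).IsValuation (fun y => G.dist x y.1 - m) ∧
    (G.sub PS LS).Mf (fun y => G.dist x y.1 - m) = d - m := by
  open SimpleGraph Sum IVAux IVMain in
  have hconn' := gp_conn hG hd
  -- a point and a line of the subgeometry
  obtain ⟨pS, lS, hplS⟩ := gp_exists_edge hS hd
  have hPSne : PS.Nonempty := ⟨pS.1, pS.2⟩
  -- m is attained
  have hmem : m ∈ G.dist x '' PS := by
    rw [hm]
    exact Nat.sInf_mem (hPSne.image _)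
  obtain ⟨p₀, hp₀PS, hp₀⟩ := hmem
  have hlb : ∀ y ∈ PS, m ≤ G.dist x y := by
    intro y hy
    rw [hm]
    exact Nat.sInf_le ⟨y, hy, rfl⟩
  have hdle : ∀ y : G.P, G.dist x y ≤ d := dist_pt_le hG hd x
  -- m ≤ d - 1
  have hmd : m ≤ d - 1 := by
    obtain ⟨p, hIp, hple, _, _⟩ := line_nearest_pt hG hd x lS.1
    have hpPS : p ∈ PS := hfull lS.1 lS.2 p hIp
    have := hlb p hpPS
    omega
  haveI hne : Nonempty (G.sub PS LS).P := ⟨⟨p₀, hp₀PS⟩⟩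
  -- existence of points at every admissible distance
  have hstep : ∀ j : ℕ, m + j ≤ d → ∃ y ∈ PS, G.dist x y = m + j := by
    intro j
    induction j with
    | zero => exact fun _ => ⟨p₀, hp₀PS, hp₀⟩
    | succ j ih =>
      intro hj
      obtain ⟨y, hyPS, hyd⟩ := ih (by omega)
      obtain ⟨y', hy'PS, hy'd⟩ := step_up hd hG hfull hS x y hyPS hyd (by omega)
      exact ⟨y', hy'PS, by omega⟩
  -- the maximum value
  have hMf : (G.sub PS LS).Mf (fun y => G.dist x y.1 - m) = d - m := by
    apply le_antisymm
    · apply ciSup_le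
      intro y
      have := hdle y.1
      simp only
      omega
    · obtain ⟨y, hyPS, hyd⟩ := hstep (d - m) (by omega)
      have hbdd : BddAbove (Set.range (fun y : (G.sub PS LS).P => G.dist x y.1 - m)) := by
        refine ⟨d - m, ?_⟩
        rintro v ⟨i, rfl⟩
        have := hdle i.1
        simp only
        omega
      have h1 : G.dist x y - m ≤ (G.sub PS LS).Mf (fun y => G.dist x y.1 - m) :=
        le_ciSup hbdd (⟨y, hyPS⟩ : (G.sub PS LS).P)
      have : G.dist x y - m = d - m := by omega
      omega
  refine ⟨hmd, ⟨?_, ?_, ?_⟩, hMf⟩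
  · -- exists_zero
    exact ⟨⟨p₀, hp₀PS⟩, by simp only; omega⟩
  · -- line property
    intro l
    obtain ⟨p, hIp, hple, h2p, huniq⟩ := line_nearest_pt hG hd x l.1
    have hpPS : p ∈ PS := hfull l.1 l.2 p hIp
    have hplb := hlb p hpPS
    refine ⟨⟨p, hpPS⟩, ⟨hIp, ?_⟩, ?_⟩
    · intro y hyI hyne
      have hy1 : y.1 ≠ p := fun hh => hyne (Subtype.ext hh)
      have := huniq y.1 hyI hy1
      have := hlb y.1 y.2
      simp only
      omega
    · rintro z ⟨hzI, hz⟩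
      by_contra hzp
      have h1 := hz ⟨p, hpPS⟩ hIp (fun hh => hzp hh.symm)
      have h2 : G.dist x z.1 = G.dist x p + 1 :=
        huniq z.1 hzI (fun hh => hzp (Subtype.ext hh))
      have := hlb z.1 z.2
      simp only at h1
      omega
  · -- pv3
    intro p₁ hp₁ l₁ l₂ hi₁ hi₂ h₁ h₂
    obtain ⟨y₁, hy₁I, hy₁f⟩ := h₁
    obtain ⟨y₂, hy₂I, hy₂f⟩ := h₂
    rw [hMf] at hp₁
    have hk := hlb p₁.1 p₁.2
    have hky₁ := hlb y₁.1 y₁.2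
    have hky₂ := hlb y₂.1 y₂.2
    have hdp₁ := hdle p₁.1
    have hd₁ : G.dist x y₁.1 + 1 = G.dist x p₁.1 := by omega
    have hd₂ : G.dist x y₂.1 + 1 = G.dist x p₁.1 := by omega
    have hkd : G.dist x p₁.1 < d := by omega
    have := dec_line_unique hG hd x p₁.1 rfl hkd l₁.1 l₂.1 hi₁ hi₂
      y₁.1 hy₁I hd₁ y₂.1 hy₂I hd₂
    exact Subtype.ext this
end

section
/- Let S be a generalized hexagon that is a full subgeometry of a generalized hexagon S', and let x be a point of S' at distance 2 from the point set of S. Then the set of points of S at distance exactly 2 from x (in the point graph of S') is a 1-ovoid of S. -/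
open SimpleGraph


/-- Two distinct paths between the same endpoints yield a cycle of length at most
the sum of their lengths. -/
lemma two_paths_cycle {V : Type*} {G : SimpleGraph V} :
    ∀ (n : ℕ) {u v : V} (p q : G.Walk u v), p.length + q.length ≤ n →
      p.IsPath → q.IsPath → p ≠ q →
      ∃ (w : V) (c : G.Walk w w), c.IsCycle ∧ c.length ≤ p.length + q.length := by
  classical
  intro n
  induction n with
  | zero =>
    intro u v p q hlen hp hq hne
    cases p with
    | nil =>
      exact absurd (Walk.isPath_iff_eq_nil.1 hq).symm hne
    | cons h p' => simp [Walk.length_cons] at hlen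
  | succ n IH =>
    intro u v p q hlen hp hq hne
    cases p with
    | nil =>
      exact absurd (Walk.isPath_iff_eq_nil.1 hq).symm hne
    | @cons _ a _ h p' =>
      cases q with
      | nil =>
        have := Walk.isPath_iff_eq_nil.1 hp
        simp at this
      | @cons _ b _ h2 q' =>
        have hp' : p'.IsPath := hp.of_cons
        have hq' : q'.IsPath := hq.of_cons
        have hup' : u ∉ p'.support := ((Walk.cons_isPath_iff _ _).1 hp).2
        have huq' : u ∉ q'.support := ((Walk.cons_isPath_iff _ _).1 hq).2
        by_cases hab : a = b
        · subst hab
          have hne' : p' ≠ q' := by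
            rintro rfl; exact hne rfl
          obtain ⟨w, c, hc, hlenc⟩ := IH p' q'
            (by simp only [Walk.length_cons] at hlen; omega) hp' hq' hne'
          exact ⟨w, c, hc, by simp only [Walk.length_cons]; omega⟩
        · set P : G.Walk a b := (p'.append q'.reverse).bypass with hPdef
          have hPpath : P.IsPath := Walk.bypass_isPath _
          have hPlen : P.length ≤ p'.length + q'.length := by
            calc P.length ≤ (p'.append q'.reverse).length := Walk.length_bypass_le _
              _ = p'.length + q'.length := by
                  rw [Walk.length_append, Walk.length_reverse]
          have huP : u ∉ P.support := by
            intro hu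
            have := Walk.support_bypass_subset _ hu
            rw [Walk.mem_support_append_iff] at this
            rcases this with h' | h'
            · exact hup' h'
            · rw [Walk.support_reverse, List.mem_reverse] at h'
              exact huq' h'
          have hQpath : (P.concat h2.symm).IsPath := by
            rw [Walk.isPath_def, Walk.support_concat]
            rw [List.nodup_append]
            refine ⟨hPpath.support_nodup, List.nodup_singleton _, ?_⟩
            intro z hz b hz' hzb
            rw [List.mem_singleton] at hz'
            rw [hzb, hz'] at hz
            exact huP hz
          have hedge : s(u, a) ∉ (P.concat h2.symm).edges := by
            rw [Walk.edges_concat]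
            intro hmem
            rw [List.concat_eq_append, List.mem_append] at hmem
            rcases hmem with hm | hm
            · exact huP (Walk.fst_mem_support_of_mem_edges _ hm)
            · rw [List.mem_singleton, Sym2.eq_iff] at hm
              rcases hm with ⟨h1, h2'⟩ | ⟨h1, h2'⟩
              · exact G.loopless.irrefl u (h2' ▸ h)
              · exact hab h2'
          refine ⟨u, Walk.cons h (P.concat h2.symm), ?_, ?_⟩
          · exact SimpleGraph.Path.cons_isCycle ⟨P.concat h2.symm, hQpath⟩ h hedge
          · simp only [Walk.length_cons, Walk.length_concat]
            omega

lemma Geometry.incAdj_isLeft (G : Geometry) {a b : G.P ⊕ G.L} (h : G.incGraph.Adj a b) :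
    a.isLeft = !b.isLeft := by
  cases a with
  | inl p =>
    cases b with
    | inl p' => exact False.elim h
    | inr l => rfl
  | inr l =>
    cases b with
    | inl p => rfl
    | inr l' => exact False.elim h

lemma Geometry.walk_parity (G : Geometry) {a b : G.P ⊕ G.L} (W : G.incGraph.Walk a b) :
    (a.isLeft = b.isLeft) ↔ Even W.length := by
  induction W with
  | nil => simp
  | @cons u v w h W' ih =>
    rw [Walk.length_cons, Nat.even_add_one, ← ih, Geometry.incAdj_isLeft G h]
    cases hc : v.isLeft <;> cases hb : w.isLeft <;> simp [hc, hb]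

lemma Geometry.proj_walk (G : Geometry) :
    ∀ (n : ℕ) {x y : G.P} (W : G.incGraph.Walk (Sum.inl x) (Sum.inl y)),
      W.length ≤ n → ∃ W' : G.pointGraph.Walk x y, 2 * W'.length ≤ W.length := by
  intro n
  induction n using Nat.strong_induction_on with
  | _ n IH =>
    intro x y W hlen
    cases W with
    | nil => exact ⟨Walk.nil, by simp⟩
    | @cons _ c _ h W1 =>
      cases c with
      | inl p => exact False.elim h
      | inr m =>
        cases W1 with
        | @cons _ d _ h2 W2 =>
          cases d with
          | inr m' => exact False.elim h2
          | inl p =>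
            have hn2 : 2 ≤ n := by
              simp only [Walk.length_cons] at hlen; omega
            obtain ⟨W', hW'⟩ := IH (n - 1) (by omega) W2
              (by simp only [Walk.length_cons] at hlen; omega)
            by_cases hxp : x = p
            · subst hxp
              exact ⟨W', by simp only [Walk.length_cons] at *; omega⟩
            · refine ⟨Walk.cons (show x ≠ p ∧ ∃ l, G.I x l ∧ G.I p l from ⟨hxp, m, h, h2⟩) W', ?_⟩
              show 2 * (W'.length + 1) ≤ _
              simp only [Walk.length_cons] at *; omega

lemma Geometry.lift_walk (G : Geometry) {x y : G.P} (W : G.pointGraph.Walk x y) :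
    ∃ W2 : G.incGraph.Walk (Sum.inl x) (Sum.inl y), W2.length = 2 * W.length := by
  induction W with
  | nil => exact ⟨Walk.nil, by simp⟩
  | @cons u v w h W' ih =>
    obtain ⟨hne, m, h1, h2⟩ := h
    obtain ⟨W2, hW2⟩ := ih
    refine ⟨Walk.cons (show G.incGraph.Adj (Sum.inl u) (Sum.inr m) from h1)
      (Walk.cons (show G.incGraph.Adj (Sum.inr m) (Sum.inl v) from h2) W2), ?_⟩
    show _ = 2 * (W'.length + 1)
    simp only [Walk.length_cons, hW2]; omega

lemma Geometry.last_edge (G : Geometry) :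
    ∀ (n : ℕ) {a : G.P ⊕ G.L} {l : G.L} (W : G.incGraph.Walk a (Sum.inr l)),
      W.length ≤ n → 1 ≤ W.length →
      ∃ (p : G.P) (W2 : G.incGraph.Walk a (Sum.inl p)), G.I p l ∧ W2.length + 1 = W.length := by
  intro n
  induction n using Nat.strong_induction_on with
  | _ n IH =>
    intro a l W hlen h1
    cases W with
    | nil => simp at h1
    | @cons _ c _ h W1 =>
      cases W1 with
      | nil =>
        cases a with
        | inl p => exact ⟨p, Walk.nil, h, by simp⟩
        | inr m => exact False.elim h
      | @cons _ d _ h2 W2 =>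
        have hn2 : 2 ≤ n := by
          simp only [Walk.length_cons] at hlen; omega
        obtain ⟨p, W2', hIp, hlen'⟩ := IH (n - 1) (by omega) (Walk.cons h2 W2)
          (by simp only [Walk.length_cons] at hlen ⊢; omega)
          (by simp only [Walk.length_cons]; omega)
        exact ⟨p, Walk.cons h W2', hIp, by simp only [Walk.length_cons] at *; omega⟩
/-- If a generalized hexagon S is a full subgeometry of a generalized hexagon S'
and x is a point of S' at distance 2 from the point set of S, then the points of S
at distance exactly 2 from x form a 1-ovoid of S. -/
theorem distance_two_point_induces_ovoid (G : Geometry)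
    (hG : G.IsGenPolygon 3) (PS : Set G.P) (LS : Set G.L)
    (hfull : G.IsFullSub PS LS) (hS : (G.sub PS LS).IsGenPolygon 3)
    (x : G.P) (hx : G.distSet x PS = 2) :
    (G.sub PS LS).IsOvoid1 {y : ↥PS | G.dist x y.1 = 2} := by
  classical
  obtain ⟨hdiam, hgirth⟩ := hG
  -- basic girth facts
  have hgirth12 : G.incGraph.girth = 12 := by rw [hgirth]
  have hac : ¬ G.incGraph.IsAcyclic := by
    intro h
    rw [SimpleGraph.girth_eq_zero.2 h] at hgirth12
    omega
  have hegirth : G.incGraph.egirth = 12 := by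
    have hne : G.incGraph.egirth ≠ ⊤ := fun h => hac (SimpleGraph.egirth_eq_top.1 h)
    have h1 : ((G.incGraph.egirth.toNat : ℕ) : ℕ∞) = G.incGraph.egirth := ENat.coe_toNat hne
    rw [← h1]
    have : G.incGraph.egirth.toNat = 12 := hgirth12
    rw [this]
    rfl
  have no_short : ∀ (w : G.P ⊕ G.L) (c : G.incGraph.Walk w w), c.IsCycle → 12 ≤ c.length := by
    intro w c hc
    have h1 : G.incGraph.egirth ≤ (c.length : ℕ∞) :=
      iInf_le_of_le w (iInf_le_of_le c (iInf_le _ hc))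
    rw [hegirth] at h1
    exact_mod_cast h1
  have hge2 : ∀ p ∈ PS, 2 ≤ G.dist x p := by
    intro p hp
    have hmem : G.dist x p ∈ G.dist x '' PS := ⟨p, hp, rfl⟩
    calc 2 = G.distSet x PS := hx.symm
      _ ≤ G.dist x p := Nat.sInf_le hmem
  have hediam_ne : G.incGraph.ediam ≠ ⊤ := by
    rw [hdiam]; simp
  have hdiam6 : G.incGraph.diam = 6 := by
    unfold SimpleGraph.diam
    rw [hdiam]
    rfl
  intro l
  -- key uniqueness claim
  have uniq : ∀ p q : G.P, G.I p l.1 → G.I q l.1 → G.dist x p = 2 → G.dist x q = 2 → p = q := by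
    intro p q hIp hIq hp2 hq2
    by_contra hpq
    have build : ∀ z : G.P, G.I z l.1 → G.dist x z = 2 →
        ∃ C : G.incGraph.Walk (Sum.inl x) (Sum.inl z),
          C.IsPath ∧ C.length ≤ 4 ∧ Sum.inr l.1 ∉ C.support := by
      intro z hIz hz2
      have hz2' : G.pointGraph.dist x z = 2 := hz2
      have hreach : G.pointGraph.Reachable x z := by
        apply SimpleGraph.Reachable.of_dist_ne_zero
        rw [hz2']; omega
      obtain ⟨Wz, hWzlen⟩ := hreach.exists_walk_length_eq_dist
      obtain ⟨Lz, hLzlen⟩ := G.lift_walk Wz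
      refine ⟨Lz.bypass, Walk.bypass_isPath _, ?_, ?_⟩
      · calc Lz.bypass.length ≤ Lz.length := Walk.length_bypass_le _
          _ = 2 * Wz.length := hLzlen
          _ = 4 := by rw [hWzlen, hz2']
      · intro hmem
        have hAlen : Lz.bypass.length ≤ 4 := by
          calc Lz.bypass.length ≤ Lz.length := Walk.length_bypass_le _
            _ = 2 * Wz.length := hLzlen
            _ = 4 := by rw [hWzlen, hz2']
        set T := Lz.bypass.takeUntil _ hmem with hT
        have hTlen : T.length ≤ 4 :=
          le_trans (Walk.length_takeUntil_le _ _) hAlen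
        have hTodd : ¬ Even T.length := by
          intro hev
          have := (G.walk_parity T).2 hev
          simp at this
        have hTmod : T.length % 2 = 1 := Nat.odd_iff.1 (Nat.not_even_iff_odd.1 hTodd)
        obtain ⟨r, Tr, hIr, hTrlen⟩ := G.last_edge 4 T hTlen (by omega)
        obtain ⟨Wr, hWr⟩ := G.proj_walk 2 Tr (by omega)
        have hdr : G.dist x r ≤ 1 := le_trans (SimpleGraph.dist_le Wr) (by omega)
        have hrPS : r ∈ PS := hfull l.1 l.2 r hIr
        have := hge2 r hrPS
        omega
    obtain ⟨Cp, hCp, hCplen, hCpl⟩ := build p hIp hp2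
    obtain ⟨Cq, hCq, hCqlen, hCql⟩ := build q hIq hq2
    have hadjp : G.incGraph.Adj (Sum.inl p) (Sum.inr l.1) := hIp
    have hadjq : G.incGraph.Adj (Sum.inl q) (Sum.inr l.1) := hIq
    have hPp : (Cp.concat hadjp).IsPath := by
      rw [Walk.isPath_def, Walk.support_concat, List.nodup_append]
      refine ⟨hCp.support_nodup, List.nodup_singleton _, ?_⟩
      intro z hz b hz' hzb
      rw [List.mem_singleton] at hz'
      rw [hzb, hz'] at hz
      exact hCpl hz
    have hPq : (Cq.concat hadjq).IsPath := by
      rw [Walk.isPath_def, Walk.support_concat, List.nodup_append]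
      refine ⟨hCq.support_nodup, List.nodup_singleton _, ?_⟩
      intro z hz b hz' hzb
      rw [List.mem_singleton] at hz'
      rw [hzb, hz'] at hz
      exact hCql hz
    have hnepq : Cp.concat hadjp ≠ Cq.concat hadjq := by
      intro h
      obtain ⟨hv, -⟩ := Walk.concat_inj h
      exact hpq (Sum.inl.inj hv)
    obtain ⟨w, c, hc, hclen⟩ := two_paths_cycle 10 (Cp.concat hadjp) (Cq.concat hadjq)
      (by simp only [Walk.length_concat]; omega) hPp hPq hnepq
    have h12 := no_short w c hc
    simp only [Walk.length_concat] at hclen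
    omega
  -- existence
  have hreach2 : G.incGraph.edist (Sum.inl x) (Sum.inr l.1) ≠ ⊤ := by
    intro h
    have h1 : G.incGraph.edist (Sum.inl x) (Sum.inr l.1) ≤ G.incGraph.ediam :=
      SimpleGraph.edist_le_ediam
    rw [h, hdiam] at h1
    exact absurd h1 (by simp)
  obtain ⟨W, hWlen⟩ :=
    (G.incGraph.reachable_of_edist_ne_top hreach2).exists_walk_length_eq_dist
  have hW6 : W.length ≤ 6 := by
    rw [hWlen, ← hdiam6]
    exact SimpleGraph.dist_le_diam hediam_ne
  have hWodd : ¬ Even W.length := by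
    intro hev
    have := (G.walk_parity W).2 hev
    simp at this
  have hWmod : W.length % 2 = 1 := Nat.odd_iff.1 (Nat.not_even_iff_odd.1 hWodd)
  obtain ⟨p, W2, hIp, hW2len⟩ := G.last_edge 6 W hW6 (by omega)
  obtain ⟨W', hW'⟩ := G.proj_walk 5 W2 (by omega)
  have hdxp : G.dist x p ≤ 2 := le_trans (SimpleGraph.dist_le W') (by omega)
  have hpPS : p ∈ PS := hfull l.1 l.2 p hIp
  have hdxp2 : G.dist x p = 2 := le_antisymm hdxp (hge2 p hpPS)
  refine ⟨⟨p, hpPS⟩, ⟨hIp, hdxp2⟩, ?_⟩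
  rintro ⟨q, hqPS⟩ ⟨hIq, hq2⟩
  exact Subtype.ext (uniq q p hIq hIp hq2 hdxp2)
end
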